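/- arXiv:1402.3438 — 7 statements merged into one kernel-verified Lean document; each statement's English description precedes it below -/
import Mathlib

section
/- Let f be a finitely supported probability distribution on the nonnegative integers, and define its thinning T_t f(k) = Σ_{l≥0} C(l,k) t^k (1−t)^{l−k} f(l) for t ∈ [0,1]. Define g_t(k) = −Σ_{l≤k} ∂/∂t f_t(l) and h_t(k) = −Σ_{l≤k} ∂/∂t g_t(l) where f_t = T_t f. Then for every integer k, f_t(k)·h_t(k−1) = g_t(k)·g_t(k−1). -/
/-!
Write `f_t(k) = ∑ₗ f(l) bₗₖ(t)` with the Bernstein polynomials `bₙₖ`. Telescoping the derivative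
formula of `bₙₖ` gives `-∑_{i ≤ k} b'ₙᵢ = n bₙ₋₁,ₖ`, so `g_t(k) = ∑ₗ l f(l) bₗ₋₁,ₖ(t)` and
`h_t(k) = ∑ₗ l(l-1) f(l) bₗ₋₂,ₖ(t)`. The binomial identity `(k+1) bₙ,ₖ₊₁ = n X bₙ₋₁,ₖ` then gives
`t g_t(k-1) = k f_t(k)` and `t h_t(k-1) = k g_t(k)`, hence `k f_t(k) h_t(k-1) = k g_t(k) g_t(k-1)`.
-/

open Polynomial Finset

namespace bernsteinPolynomial

variable {R : Type*} [CommRing R]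

theorem sum_range_derivative (n k : ℕ) :
    ∑ ν ∈ range (k + 1), derivative (bernsteinPolynomial R n ν) =
      -n * bernsteinPolynomial R (n - 1) k := by
  induction k with
  | zero => simp [derivative_zero]
  | succ k ih => rw [sum_range_succ, ih, derivative_succ]; ring

theorem add_one_mul_succ (n k : ℕ) :
    ((k : R[X]) + 1) * bernsteinPolynomial R n (k + 1) =
      (n : R[X]) * X * bernsteinPolynomial R (n - 1) k := by
  cases n with
  | zero => simp [eq_zero_of_lt _ (Nat.succ_pos k)]
  | succ m =>
    have hchoose : ((m + 1).choose (k + 1) : R[X]) * ((k : R[X]) + 1) =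
        ((m : R[X]) + 1) * (m.choose k : R[X]) := by
      simpa using congrArg (Nat.cast : ℕ → R[X]) (Nat.add_one_mul_choose_eq m k).symm
    simp only [bernsteinPolynomial, Nat.add_sub_cancel, Nat.add_sub_add_right]
    push_cast
    linear_combination X ^ (k + 1) * (1 - X) ^ (m - k) * hchoose

end bernsteinPolynomial

section ThinningPoly

variable {R : Type*} [CommRing R]

/-- `thinningPoly N f j` is the sequence `k ↦ ∑ₗ l(l-1)⋯(l-j+1) f(l) bₗ₋ⱼ,ₖ`: for `j = 0, 1, 2` it
gives `f_t`, `g_t`, `h_t`. The descending factorial vanishes whenever `l - j` is truncated. -/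
noncomputable def thinningPoly (N : ℕ) (f : ℕ → R) (j k : ℕ) : R[X] :=
  ∑ l ∈ range N, C (l.descFactorial j * f l) * bernsteinPolynomial R (l - j) k

variable (N : ℕ) (f : ℕ → R)

theorem neg_sum_derivative_thinningPoly (j k : ℕ) :
    -∑ i ∈ range (k + 1), derivative (thinningPoly N f j i) = thinningPoly N f (j + 1) k := by
  simp only [thinningPoly, derivative_sum, derivative_C_mul]
  rw [sum_comm, ← sum_neg_distrib]
  refine sum_congr rfl fun l _ => ?_
  rw [← mul_sum, bernsteinPolynomial.sum_range_derivative, Nat.descFactorial_succ, Nat.sub_sub]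
  simp only [map_mul, map_natCast]
  push_cast
  ring

theorem X_mul_thinningPoly_succ (j k : ℕ) :
    X * thinningPoly N f (j + 1) k = ((k : R[X]) + 1) * thinningPoly N f j (k + 1) := by
  simp only [thinningPoly, mul_sum]
  refine sum_congr rfl fun l _ => ?_
  rw [mul_left_comm ((k : R[X]) + 1), bernsteinPolynomial.add_one_mul_succ, Nat.descFactorial_succ,
    Nat.sub_sub]
  simp only [map_mul, map_natCast]
  push_cast
  ring

theorem thinningPoly_zero_mul_two [IsDomain R] [CharZero R] (k : ℕ) :
    thinningPoly N f 0 (k + 1) * thinningPoly N f 2 k =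
      thinningPoly N f 1 (k + 1) * thinningPoly N f 1 k := by
  have hk : (k : R[X]) + 1 ≠ 0 := by exact_mod_cast k.succ_ne_zero
  apply mul_left_cancel₀ hk
  calc ((k : R[X]) + 1) * (thinningPoly N f 0 (k + 1) * thinningPoly N f 2 k)
      = X * thinningPoly N f 1 k * thinningPoly N f 2 k := by
        rw [X_mul_thinningPoly_succ]; ring
    _ = ((k : R[X]) + 1) * (thinningPoly N f 1 (k + 1) * thinningPoly N f 1 k) := by
        rw [mul_right_comm, X_mul_thinningPoly_succ]; ring

end ThinningPoly

theorem neg_sum_Icc_deriv_eq_eval {F : ℝ → ℤ → ℝ} {P : ℕ → ℝ[X]}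
    (hF : ∀ s (k : ℕ), F s k = (P k).eval s) (t : ℝ) (k : ℕ) :
    -∑ l ∈ Icc (0 : ℤ) k, deriv (fun s => F s l) t =
      (-∑ i ∈ range (k + 1), derivative (P i)).eval t := by
  rw [Int.Icc_eq_finset_map, sum_map]
  simp [hF, Polynomial.deriv, eval_finsetSum]

theorem thinning_benamou_brenier_general
    (N : ℕ) (f : ℕ → ℝ)
    (ft : ℝ → ℤ → ℝ)
    (hft : ∀ t (k : ℤ), ft t k =
      if k < 0 then 0 else
        ∑ l ∈ Finset.range N,
          (l.choose k.toNat : ℝ) * t ^ k.toNat * (1 - t) ^ (l - k.toNat) * f l)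
    (g h : ℝ → ℤ → ℝ)
    (hg : ∀ t (k : ℤ), g t k = -∑ l ∈ Finset.Icc (0 : ℤ) k, deriv (fun s => ft s l) t)
    (hh : ∀ t (k : ℤ), h t k = -∑ l ∈ Finset.Icc (0 : ℤ) k, deriv (fun s => g s l) t)
    (t : ℝ) (k : ℤ) :
    ft t k * h t (k - 1) = g t k * g t (k - 1) := by
  have hf₀ : ∀ s (k : ℕ), ft s k = (thinningPoly N f 0 k).eval s := by
    intro s k
    simp [hft, thinningPoly, bernsteinPolynomial, eval_finsetSum, mul_comm]
  have hg₁ : ∀ s (k : ℕ), g s k = (thinningPoly N f 1 k).eval s := by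
    intro s k
    rw [hg, neg_sum_Icc_deriv_eq_eval hf₀, neg_sum_derivative_thinningPoly]
  have hh₂ : ∀ s (k : ℕ), h s k = (thinningPoly N f 2 k).eval s := by
    intro s k
    rw [hh, neg_sum_Icc_deriv_eq_eval hg₁, neg_sum_derivative_thinningPoly]
  rcases le_or_gt k 0 with hk | hk
  · have hg_neg : g t (k - 1) = 0 := by rw [hg, Icc_eq_empty (by omega), sum_empty, neg_zero]
    have hh_neg : h t (k - 1) = 0 := by rw [hh, Icc_eq_empty (by omega), sum_empty, neg_zero]
    rw [hg_neg, hh_neg, mul_zero, mul_zero]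
  · obtain ⟨K, rfl⟩ : ∃ K : ℕ, k = (K + 1 : ℕ) := ⟨(k - 1).toNat, by omega⟩
    rw [show ((K + 1 : ℕ) : ℤ) - 1 = K by push_cast; ring, hf₀, hh₂, hg₁, hg₁, ← eval_mul,
      ← eval_mul, thinningPoly_zero_mul_two]

theorem thinning_benamou_brenier
    (N : ℕ) (f : ℕ → ℝ)
    (hf : ∀ l, 0 ≤ f l)
    (hsupp : ∀ l, N ≤ l → f l = 0)
    (hsum : ∑ l ∈ Finset.range N, f l = 1)
    (ft : ℝ → ℤ → ℝ)
    (hft : ∀ t (k : ℤ), ft t k =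
      if k < 0 then 0 else
        ∑ l ∈ Finset.range N,
          (l.choose k.toNat : ℝ) * t ^ k.toNat * (1 - t) ^ (l - k.toNat) * f l)
    (g h : ℝ → ℤ → ℝ)
    (hg : ∀ t (k : ℤ), g t k = -∑ l ∈ Finset.Icc (0 : ℤ) k, deriv (fun s => ft s l) t)
    (hh : ∀ t (k : ℤ), h t k = -∑ l ∈ Finset.Icc (0 : ℤ) k, deriv (fun s => g s l) t)
    (t : ℝ) (ht : t ∈ Set.Icc (0 : ℝ) 1) (k : ℤ) :
    ft t k * h t (k - 1) = g t k * g t (k - 1) :=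
  thinning_benamou_brenier_general N f ft hft g h hg hh t k
end

section
/- Let (f_t)_{t∈[0,1]} be a smooth family of finitely supported probability distributions on ℤ. Define g_t(k) = −Σ_{l≤k} ∂/∂t f_t(l) and h_t(k) = −Σ_{l≤k} ∂/∂t g_t(l). Suppose that for all k, f_t(k)h_t(k−1) = g_t(k)g_t(k−1) and g_t(k) ≥ 0. Then the entropy H(t) = Σ_k f_t(k) log f_t(k) is a convex function of t on [0,1]. -/
open scoped BigOperators
open Real Finset Filter

noncomputable section

/-- difference of cumulative sums -/
lemma filter_sum_step (S : Finset ℤ) (v : ℤ → ℝ) (k : ℤ) :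
    (∑ l ∈ S.filter (· ≤ k), v l) - (∑ l ∈ S.filter (· ≤ k - 1), v l)
      = if k ∈ S then v k else 0 := by
  have hsub : S.filter (· ≤ k - 1) ⊆ S.filter (· ≤ k) := by
    apply Finset.monotone_filter_right
    intro x hx
    omega
  have h1 : (∑ l ∈ S.filter (· ≤ k) \ S.filter (· ≤ k - 1), v l)
      + (∑ l ∈ S.filter (· ≤ k - 1), v l) = ∑ l ∈ S.filter (· ≤ k), v l :=
    Finset.sum_sdiff hsub
  have h2 : S.filter (· ≤ k) \ S.filter (· ≤ k - 1) = S.filter (· = k) := by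
    ext x
    simp only [Finset.mem_sdiff, Finset.mem_filter]
    constructor
    · rintro ⟨⟨hx, hxk⟩, hnot⟩
      refine ⟨hx, ?_⟩
      by_contra hne
      exact hnot ⟨hx, by omega⟩
    · rintro ⟨hx, rfl⟩
      exact ⟨⟨hx, le_refl _⟩, fun h => by omega⟩
  have h3 : (∑ l ∈ S.filter (· = k), v l) = if k ∈ S then v k else 0 := by
    rw [Finset.sum_filter, Finset.sum_ite_eq' S k v]
  rw [← h1, h2, h3]; ring

/-- shift of a sum over Icc -/
lemma sum_shift (v : ℤ → ℝ) (lo hi c : ℤ) :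
    (∑ k ∈ Finset.Icc lo hi, v (k + c)) = ∑ k ∈ Finset.Icc (lo + c) (hi + c), v k := by
  rw [← Finset.map_add_right_Icc lo hi c, Finset.sum_map]
  rfl

/-- shift of sum when the function is supported inside the window, margin m -/
lemma sum_shift_support (v : ℤ → ℝ) (lo hi c : ℤ) (hc : -3 ≤ c ∧ c ≤ 3)
    (hv : ∀ k, v k ≠ 0 → lo + 3 ≤ k ∧ k ≤ hi - 3) :
    (∑ k ∈ Finset.Icc lo hi, v (k + c)) = ∑ k ∈ Finset.Icc lo hi, v k := by
  rw [sum_shift]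
  have key : ∀ (a b : ℤ), a ≤ lo + 3 → hi - 3 ≤ b →
      (∑ k ∈ Finset.Icc a b, v k) = ∑ k ∈ Finset.Icc (lo+3) (hi-3), v k := by
    intro a b ha hb
    rw [← Finset.sum_subset (Finset.Icc_subset_Icc ha hb)]
    intro x _ hx
    by_contra hne
    have := hv x hne
    simp only [Finset.mem_Icc] at hx
    omega
  rcases le_or_gt lo hi with hlh | hlh
  · rcases le_or_gt (lo+3) (hi-3) with hne | hne
    · rw [key (lo+c) (hi+c) (by omega) (by omega), key lo hi (by omega) (by omega)]
    · -- window too small: all terms vanish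
      have hz : ∀ x, v x = 0 := by
        intro x
        by_contra hne'
        have := hv x hne'
        omega
      simp [hz]
  · rw [Finset.Icc_eq_empty (by omega), Finset.Icc_eq_empty (by omega)]

/-- 1 - x⁻¹ ≤ log x -/
lemma one_sub_inv_le_log {x : ℝ} (hx : 0 < x) : 1 - x⁻¹ ≤ Real.log x := by
  have h := Real.log_le_sub_one_of_pos (inv_pos.mpr hx)
  rw [Real.log_inv] at h
  linarith

/-- the key log inequality -/
lemma log_ineq {b c p q r : ℝ} (hb : 0 < b) (hc : 0 < c) (hp : 0 < p) (hq : 0 < q)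
    (hr : 0 < r) :
    2*(b*c/q) - b^2/p - c^2/r ≤ (b*c/q) * (Real.log p + Real.log r - 2*Real.log q) := by
  have key : ∀ b' c' p' q' r' : ℝ, 0 < b' → 0 < c' → 0 < p' → 0 < q' → 0 < r' →
      b'*c'/q' - b'^2/p' ≤ (b'*c'/q') * (Real.log p' + Real.log c' - Real.log q' - Real.log b') := by
    intro b c p q r hb hc hp hq hr
    have hx : (0:ℝ) < p*c/(q*b) := by positivity
    have h1 : 1 - (p*c/(q*b))⁻¹ ≤ Real.log (p*c/(q*b)) := one_sub_inv_le_log hx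
    have h2 : Real.log (p*c/(q*b)) = Real.log p + Real.log c - Real.log q - Real.log b := by
      rw [Real.log_div (by positivity) (by positivity), Real.log_mul hp.ne' hc.ne',
        Real.log_mul hq.ne' hb.ne']
      ring
    rw [h2] at h1
    have h3 : (b*c/q) * (1 - (p*c/(q*b))⁻¹) ≤ (b*c/q) * (Real.log p + Real.log c - Real.log q - Real.log b) :=
      mul_le_mul_of_nonneg_left h1 (by positivity)
    have h4 : (b*c/q) * (1 - (p*c/(q*b))⁻¹) = b*c/q - b^2/p := by
      field_simp
    linarith
  have k1 := key b c p q r hb hc hp hq hr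
  have k2 := key c b r q p hc hb hr hq hp
  have hcb : c*b/q = b*c/q := by ring
  rw [hcb] at k2
  nlinarith [k1, k2]

lemma cd_deriv {φ : ℝ → ℝ} (hφ : ContDiff ℝ (⊤:ℕ∞) φ) : ContDiff ℝ (⊤:ℕ∞) (deriv φ) :=
  (contDiff_infty_iff_deriv.mp hφ).2

lemma cd_diff {φ : ℝ → ℝ} (hφ : ContDiff ℝ (⊤:ℕ∞) φ) : Differentiable ℝ φ :=
  (contDiff_infty_iff_deriv.mp hφ).1

/-- Taylor-type quadratic bound -/
lemma quad_bound {φ : ℝ → ℝ} (hφ : ContDiff ℝ (⊤:ℕ∞) φ) {t δ K : ℝ}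
    (hK : ∀ u ∈ Set.Icc (t-δ) (t+δ), |deriv (deriv φ) u| ≤ K) :
    ∀ s ∈ Set.Icc (t-δ) (t+δ), |φ s - φ t - deriv φ t * (s-t)| ≤ K * (s-t)^2 := by
  intro s hs
  have htmem : t ∈ Set.Icc (t-δ) (t+δ) := by
    constructor <;> [linarith [hs.1, hs.2]; linarith [hs.1, hs.2]]
  -- step 1 : bound on deriv φ differences
  have step1 : ∀ u ∈ Set.Icc (t-δ) (t+δ), |deriv φ u - deriv φ t| ≤ K * |u - t| := by
    intro u hu
    have := Convex.norm_image_sub_le_of_norm_deriv_le (f := deriv φ)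
      (s := Set.Icc (t-δ) (t+δ))
      (fun x _ => (cd_diff (cd_deriv hφ)).differentiableAt)
      (fun x hx => by simpa [Real.norm_eq_abs] using hK x hx)
      (convex_Icc _ _) htmem hu
    simpa [Real.norm_eq_abs] using this
  -- step 2 : apply MVT to ψ on uIcc t s
  set ψ : ℝ → ℝ := fun x => φ x - deriv φ t * x with hψ
  have hsub : Set.uIcc t s ⊆ Set.Icc (t-δ) (t+δ) := by
    intro u hu
    rw [Set.mem_uIcc] at hu
    constructor
    · rcases hu with ⟨h1, _⟩ | ⟨h1, h2⟩ <;> linarith [hs.1, hs.2]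
    · rcases hu with ⟨h1, h2⟩ | ⟨h1, h2⟩ <;> linarith [hs.1, hs.2]
  have hd : ∀ x : ℝ, HasDerivAt ψ (deriv φ x - deriv φ t) x := by
    intro x
    have h1 := ((cd_diff hφ x).hasDerivAt).sub ((hasDerivAt_id x).const_mul (deriv φ t))
    simp only [mul_one] at h1
    exact h1
  have hψderiv : ∀ x : ℝ, deriv ψ x = deriv φ x - deriv φ t := fun x => (hd x).deriv
  have step2 := Convex.norm_image_sub_le_of_norm_deriv_le (f := ψ)
    (s := Set.uIcc t s)
    (fun x _ => (hd x).differentiableAt)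
    (fun x hx => by
      rw [hψderiv x, Real.norm_eq_abs]
      calc |deriv φ x - deriv φ t| ≤ K * |x - t| := step1 x (hsub hx)
        _ ≤ K * |s - t| := by
          have hxb : |x - t| ≤ |s - t| := by
            rw [Set.mem_uIcc] at hx
            rw [abs_le]
            constructor
            · rcases hx with ⟨h1, h2⟩ | ⟨h1, h2⟩ <;>
                [linarith [le_abs_self (s-t), neg_abs_le (s-t)];
                 linarith [le_abs_self (s-t), neg_abs_le (s-t)]]
            · rcases hx with ⟨h1, h2⟩ | ⟨h1, h2⟩ <;>
                [linarith [le_abs_self (s-t), neg_abs_le (s-t)];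
                 linarith [le_abs_self (s-t), neg_abs_le (s-t)]]
          have hKnn : 0 ≤ K := le_trans (abs_nonneg _) (hK t htmem)
          exact mul_le_mul_of_nonneg_left hxb hKnn)
    (convex_uIcc _ _) Set.left_mem_uIcc Set.right_mem_uIcc
  have : |ψ s - ψ t| ≤ K * |s - t| * |s - t| := by
    simpa [Real.norm_eq_abs] using step2
  have heq : φ s - φ t - deriv φ t * (s-t) = ψ s - ψ t := by simp only [hψ]; ring
  rw [heq]
  calc |ψ s - ψ t| ≤ K * |s - t| * |s - t| := this
    _ = K * (|s-t| * |s-t|) := by ring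
    _ = K * (s-t)^2 := by rw [abs_mul_abs_self]; ring

/-- Glaeser-type inequality -/
lemma glaeser {φ : ℝ → ℝ} (hφ : ContDiff ℝ (⊤:ℕ∞) φ) {t δ K : ℝ} (hδ : 0 < δ) (hKpos : 0 < K)
    (hK : ∀ u ∈ Set.Icc (t-2*δ) (t+2*δ), |deriv (deriv φ) u| ≤ K)
    (hpos : ∀ u ∈ Set.Icc (t-2*δ) (t+2*δ), 0 ≤ φ u) :
    ∀ s ∈ Set.Icc (t-δ) (t+δ), φ s ≤ K*δ^2 → |deriv φ s| ≤ 2*Real.sqrt (K * φ s) := by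
  intro s hs hsmall
  have hquad := quad_bound hφ (t := s) (δ := δ) (K := K)
    (fun u hu => hK u ⟨by linarith [hs.1, hu.1], by linarith [hs.2, hu.2]⟩)
  have hq : ∀ h : ℝ, |h| ≤ δ → 0 ≤ φ s + deriv φ s * h + K * h^2 := by
    intro h hh
    have hmem : s + h ∈ Set.Icc (s-δ) (s+δ) := by
      rw [abs_le] at hh
      constructor <;> [linarith [hh.1]; linarith [hh.2]]
    have h1 := hquad (s+h) hmem
    have h2 : (0:ℝ) ≤ φ (s+h) := hpos (s+h) ⟨by rw [abs_le] at hh; linarith [hs.1, hh.1],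
      by rw [abs_le] at hh; linarith [hs.2, hh.2]⟩
    have h3 : s + h - s = h := by ring
    rw [h3] at h1
    have h4 := (abs_le.mp h1).2
    linarith
  have hφs : 0 ≤ φ s := hpos s ⟨by linarith [hs.1], by linarith [hs.2]⟩
  rcases hφs.eq_or_lt with h0 | h0
  · -- φ s = 0 : show deriv φ s = 0
    have hder : deriv φ s = 0 := by
      by_contra hne
      set d := deriv φ s
      have hd : 0 < |d| := abs_pos.mpr hne
      set h := min δ (|d|/(2*K)) with hh
      have hhpos : 0 < h := lt_min hδ (by positivity)
      have hhle : |h| ≤ δ := by rw [abs_of_pos hhpos]; exact min_le_left _ _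
      -- choose sign of h opposing d
      have key : |d| * h ≤ K * h^2 := by
        rcases le_or_gt 0 d with hd0 | hd0
        · have := hq (-h) (by rw [abs_neg, abs_of_pos hhpos]; exact min_le_left _ _)
          rw [← h0] at this
          have had : |d| = d := abs_of_nonneg hd0
          nlinarith
        · have := hq h hhle
          rw [← h0] at this
          have had : |d| = -d := abs_of_neg hd0
          nlinarith
      have hhd : h ≤ |d|/(2*K) := min_le_right _ _
      have hid : K*(|d|/(2*K)) = |d|/2 := by field_simp
      nlinarith [key, hhd, hid, mul_pos hd hhpos,
        mul_le_mul_of_nonneg_right (mul_le_mul_of_nonneg_left hhd hKpos.le) hhpos.le]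
    rw [hder, ← h0]
    simp
  · -- φ s > 0
    set h0' := Real.sqrt (φ s / K) with hh0
    have hh0pos : 0 < h0' := Real.sqrt_pos.mpr (by positivity)
    have hh0le : h0' ≤ δ := by
      rw [hh0]
      have : φ s / K ≤ δ^2 := by rw [div_le_iff₀ hKpos]; linarith [hsmall]
      calc Real.sqrt (φ s / K) ≤ Real.sqrt (δ^2) := Real.sqrt_le_sqrt this
        _ = δ := by rw [Real.sqrt_sq hδ.le]
    have hsq : K * h0'^2 = φ s := by
      rw [hh0, Real.sq_sqrt (by positivity)]
      field_simp
    have key : |deriv φ s| * h0' ≤ 2 * φ s := by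
      rcases le_or_gt 0 (deriv φ s) with hd0 | hd0
      · have := hq (-h0') (by rwa [abs_neg, abs_of_pos hh0pos])
        rw [abs_of_nonneg hd0]
        nlinarith
      · have := hq h0' (by rwa [abs_of_pos hh0pos])
        rw [abs_of_neg hd0]
        nlinarith
    have hgoal : 2 * φ s ≤ 2 * Real.sqrt (K * φ s) * h0' := by
      have h1 : Real.sqrt (K * φ s) * h0' = φ s := by
        rw [hh0, ← Real.sqrt_mul (by positivity)]
        have : K * φ s * (φ s / K) = (φ s)^2 := by field_simp
        rw [this, Real.sqrt_sq h0.le]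
      linarith [h1]
    have := le_trans key hgoal
    exact le_of_mul_le_mul_right this hh0pos

lemma neg_log_le_inv {y : ℝ} (hy : 0 < y) : -Real.log y ≤ 1/y := by
  have h := Real.log_le_sub_one_of_pos (inv_pos.mpr hy)
  rw [Real.log_inv] at h
  have : (0:ℝ) < 1/y := by positivity
  rw [one_div]
  linarith

/-- √x (1+|log x|) ≤ √x + 4 √√x  for 0 ≤ x ≤ 1 -/
lemma sqrt_log_bound {x : ℝ} (h0 : 0 ≤ x) (h1 : x ≤ 1) :
    Real.sqrt x * (1 + |Real.log x|) ≤ Real.sqrt x + 4 * Real.sqrt (Real.sqrt x) := by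
  rcases h0.eq_or_lt with h | h
  · rw [← h]; simp
  · set y := Real.sqrt (Real.sqrt x) with hy
    have hx4 : Real.sqrt x = y^2 := (Real.sq_sqrt (Real.sqrt_nonneg x)).symm
    have hypos : 0 < y := Real.sqrt_pos.mpr (Real.sqrt_pos.mpr h)
    have hlog : Real.log x = 4 * Real.log y := by
      rw [hy, Real.log_sqrt (Real.sqrt_nonneg x), Real.log_sqrt h0]
      ring
    have hxle : Real.log x ≤ 0 := Real.log_nonpos h0 h1
    have habs : |Real.log x| = -Real.log x := abs_of_nonpos hxle
    have hb : -Real.log y ≤ 1/y := neg_log_le_inv hypos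
    have hkey : y^2 * (-Real.log y) ≤ y := by
      have := mul_le_mul_of_nonneg_left hb (le_of_lt (mul_pos hypos hypos))
      calc y^2 * (-Real.log y) = (y*y) * (-Real.log y) := by ring
        _ ≤ (y*y) * (1/y) := by
            apply mul_le_mul_of_nonneg_left hb
            positivity
        _ = y := by field_simp
    rw [habs, hlog, hx4]
    nlinarith

/-- √√x (1+|log x|) ≤ √√x + 8 √√√x  for 0 ≤ x ≤ 1 -/
lemma qsqrt_log_bound {x : ℝ} (h0 : 0 ≤ x) (h1 : x ≤ 1) :
    Real.sqrt (Real.sqrt x) * (1 + |Real.log x|)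
      ≤ Real.sqrt (Real.sqrt x) + 8 * Real.sqrt (Real.sqrt (Real.sqrt x)) := by
  rcases h0.eq_or_lt with h | h
  · rw [← h]; simp
  · set z := Real.sqrt (Real.sqrt (Real.sqrt x)) with hz
    have hx4 : Real.sqrt (Real.sqrt x) = z^2 := (Real.sq_sqrt (Real.sqrt_nonneg _)).symm
    have hzpos : 0 < z := Real.sqrt_pos.mpr (Real.sqrt_pos.mpr (Real.sqrt_pos.mpr h))
    have hlog : Real.log x = 8 * Real.log z := by
      rw [hz, Real.log_sqrt (Real.sqrt_nonneg _), Real.log_sqrt (Real.sqrt_nonneg _),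
        Real.log_sqrt h0]
      ring
    have hxle : Real.log x ≤ 0 := Real.log_nonpos h0 h1
    have habs : |Real.log x| = -Real.log x := abs_of_nonpos hxle
    have hb : -Real.log z ≤ 1/z := neg_log_le_inv hzpos
    have hkey : z^2 * (-Real.log z) ≤ z := by
      calc z^2 * (-Real.log z) = (z*z) * (-Real.log z) := by ring
        _ ≤ (z*z) * (1/z) := by
            apply mul_le_mul_of_nonneg_left hb
            positivity
        _ = z := by field_simp
    rw [habs, hlog, hx4]
    nlinarith

/-- first derivative of φ log φ at an order-≥2 zero of nonneg smooth φ -/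
lemma hasDerivAt_mul_log_zero {φ : ℝ → ℝ} (hφ : ContDiff ℝ (⊤:ℕ∞) φ) {t : ℝ}
    (h0 : φ t = 0) (h1 : deriv φ t = 0) (hnn : ∀ᶠ s in nhds t, 0 ≤ φ s) :
    HasDerivAt (fun s => φ s * Real.log (φ s)) 0 t := by
  rw [hasDerivAt_iff_isLittleO]
  simp only [h0, zero_mul, sub_zero, smul_zero]
  rw [Asymptotics.isLittleO_iff]
  intro c hc
  obtain ⟨K0, hK0⟩ := (isCompact_Icc (a := t-1) (b := t+1)).exists_bound_of_continuousOn
    ((cd_deriv (cd_deriv hφ)).continuous.continuousOn)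
  set K := |K0| + 1 with hK
  have hKpos : 0 < K := by positivity
  have hKb : ∀ u ∈ Set.Icc (t-1) (t+1), |deriv (deriv φ) u| ≤ K := by
    intro u hu
    calc |deriv (deriv φ) u| = ‖deriv (deriv φ) u‖ := (Real.norm_eq_abs _).symm
      _ ≤ K0 := hK0 u hu
      _ ≤ K := by rw [hK]; linarith [le_abs_self K0]
  have hquad := quad_bound hφ (t := t) (δ := 1) hKb
  have htend : Filter.Tendsto φ (nhds t) (nhds 0) := by
    have := hφ.continuous.tendsto t
    rwa [h0] at this
  have hev1 : ∀ᶠ s in nhds t, φ s ≤ 1 := htend.eventually_le_const (by norm_num)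
  have hsqK : (0:ℝ) < Real.sqrt K := Real.sqrt_pos.mpr hKpos
  have hev2 : ∀ᶠ s in nhds t,
      Real.sqrt (φ s) + 4 * Real.sqrt (Real.sqrt (φ s)) < c / Real.sqrt K := by
    have hcont : Filter.Tendsto (fun s => Real.sqrt (φ s) + 4 * Real.sqrt (Real.sqrt (φ s)))
        (nhds t) (nhds (Real.sqrt 0 + 4 * Real.sqrt (Real.sqrt 0))) := by
      apply Filter.Tendsto.add
      · exact (Real.continuous_sqrt.tendsto 0).comp htend
      · exact (Filter.Tendsto.const_mul 4
          (((Real.continuous_sqrt.comp Real.continuous_sqrt).tendsto 0).comp htend))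
    rw [Real.sqrt_zero] at hcont
    simp only [Real.sqrt_zero, mul_zero, add_zero] at hcont
    exact hcont.eventually_lt_const (by positivity)
  have hev3 : ∀ᶠ s in nhds t, s ∈ Set.Icc (t-1) (t+1) :=
    Filter.eventually_of_mem (Icc_mem_nhds (by linarith) (by linarith)) (fun s hs => hs)
  filter_upwards [hnn, hev1, hev2, hev3] with s hs1 hs2 hs3 hs4
  have hq := hquad s hs4
  rw [h0, h1, sub_zero, zero_mul, sub_zero, abs_of_nonneg hs1] at hq
  have hsq : Real.sqrt (φ s) ≤ Real.sqrt K * |s - t| := by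
    calc Real.sqrt (φ s) ≤ Real.sqrt (K * (s-t)^2) := Real.sqrt_le_sqrt hq
      _ = Real.sqrt K * |s - t| := by
          rw [Real.sqrt_mul hKpos.le, Real.sqrt_sq_eq_abs]
  calc ‖φ s * Real.log (φ s)‖ = φ s * |Real.log (φ s)| := by
        rw [Real.norm_eq_abs, abs_mul, abs_of_nonneg hs1]
    _ ≤ φ s * (1 + |Real.log (φ s)|) := by
        apply mul_le_mul_of_nonneg_left _ hs1
        linarith
    _ = Real.sqrt (φ s) * (Real.sqrt (φ s) * (1 + |Real.log (φ s)|)) := by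
        rw [← mul_assoc, Real.mul_self_sqrt hs1]
    _ ≤ (Real.sqrt K * |s - t|) * (Real.sqrt (φ s) + 4 * Real.sqrt (Real.sqrt (φ s))) := by
        apply mul_le_mul hsq (sqrt_log_bound hs1 hs2) _ (by positivity)
        positivity
    _ ≤ (Real.sqrt K * |s - t|) * (c / Real.sqrt K) := by
        apply mul_le_mul_of_nonneg_left hs3.le
        positivity
    _ = c * ‖s - t‖ := by
        rw [Real.norm_eq_abs]
        field_simp

/-- second derivative term at a zero of nonneg smooth φ with φ''(t)=0 -/
lemma hasDerivAt_dmul_log_zero {φ : ℝ → ℝ} (hφ : ContDiff ℝ (⊤:ℕ∞) φ) {t : ℝ}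
    (h0 : φ t = 0) (h1 : deriv φ t = 0) (h2 : deriv (deriv φ) t = 0)
    (hnn : ∀ᶠ s in nhds t, 0 ≤ φ s) :
    HasDerivAt (fun s => deriv φ s * (Real.log (φ s) + 1)) 0 t := by
  rw [hasDerivAt_iff_isLittleO]
  simp only [h1, zero_mul, sub_zero, smul_zero]
  rw [Asymptotics.isLittleO_iff]
  intro c hc
  obtain ⟨ε, hε, hεnn⟩ := Metric.eventually_nhds_iff.mp hnn
  set δ := ε/5 with hδdef
  have hδ : 0 < δ := by rw [hδdef]; linarith
  have hIccnn : ∀ u ∈ Set.Icc (t-2*δ) (t+2*δ), 0 ≤ φ u := by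
    intro u hu
    apply hεnn
    rw [Real.dist_eq, abs_lt]
    constructor <;> [linarith [hu.1]; linarith [hu.2]]
  obtain ⟨K0, hK0⟩ := (isCompact_Icc (a := t-2*δ) (b := t+2*δ)).exists_bound_of_continuousOn
    ((cd_deriv (cd_deriv hφ)).continuous.continuousOn)
  set K := |K0| + 1 with hK
  have hKpos : 0 < K := by positivity
  have hKb : ∀ u ∈ Set.Icc (t-2*δ) (t+2*δ), |deriv (deriv φ) u| ≤ K := by
    intro u hu
    calc |deriv (deriv φ) u| = ‖deriv (deriv φ) u‖ := (Real.norm_eq_abs _).symm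
      _ ≤ K0 := hK0 u hu
      _ ≤ K := by rw [hK]; linarith [le_abs_self K0]
  obtain ⟨K1', hK1'⟩ := (isCompact_Icc (a := t-δ) (b := t+δ)).exists_bound_of_continuousOn
    ((cd_deriv (cd_deriv (cd_deriv hφ))).continuous.continuousOn)
  set K1 := |K1'| + 1 with hK1
  have hK1pos : 0 < K1 := by positivity
  have hK1b : ∀ u ∈ Set.Icc (t-δ) (t+δ), |deriv (deriv (deriv φ)) u| ≤ K1 := by
    intro u hu
    calc |deriv (deriv (deriv φ)) u| = ‖deriv (deriv (deriv φ)) u‖ := (Real.norm_eq_abs _).symm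
      _ ≤ K1' := hK1' u hu
      _ ≤ K1 := by rw [hK1]; linarith [le_abs_self K1']
  have hquad1 := quad_bound (cd_deriv hφ) (t := t) (δ := δ) hK1b
  have hgl := glaeser hφ hδ hKpos hKb hIccnn
  have htend : Filter.Tendsto φ (nhds t) (nhds 0) := by
    have := hφ.continuous.tendsto t
    rwa [h0] at this
  have hev1 : ∀ᶠ s in nhds t, φ s ≤ 1 := htend.eventually_le_const (by norm_num)
  have hev1' : ∀ᶠ s in nhds t, φ s ≤ K*δ^2 := htend.eventually_le_const (by positivity)
  set C := Real.sqrt 2 * Real.sqrt (Real.sqrt K) with hC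
  have hCpos : 0 < C := by
    rw [hC]
    have h2' : (0:ℝ) < Real.sqrt 2 := Real.sqrt_pos.mpr (by norm_num)
    have hKs : (0:ℝ) < Real.sqrt (Real.sqrt K) := Real.sqrt_pos.mpr (Real.sqrt_pos.mpr hKpos)
    positivity
  have hsqK1 : (0:ℝ) < Real.sqrt K1 := Real.sqrt_pos.mpr hK1pos
  have hev2 : ∀ᶠ s in nhds t,
      C * (Real.sqrt (Real.sqrt (φ s)) + 8 * Real.sqrt (Real.sqrt (Real.sqrt (φ s))))
        < c / Real.sqrt K1 := by
    have hcont : Filter.Tendsto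
        (fun s => C * (Real.sqrt (Real.sqrt (φ s)) + 8 * Real.sqrt (Real.sqrt (Real.sqrt (φ s)))))
        (nhds t) (nhds (C * (Real.sqrt (Real.sqrt 0) + 8 * Real.sqrt (Real.sqrt (Real.sqrt 0))))) := by
      apply Filter.Tendsto.const_mul
      apply Filter.Tendsto.add
      · exact ((Real.continuous_sqrt.comp Real.continuous_sqrt).tendsto 0).comp htend
      · exact Filter.Tendsto.const_mul 8
          (((Real.continuous_sqrt.comp (Real.continuous_sqrt.comp Real.continuous_sqrt)).tendsto 0).comp htend)
    simp only [Real.sqrt_zero, mul_zero, add_zero, zero_add] at hcont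
    exact hcont.eventually_lt_const (by positivity)
  have hev3 : ∀ᶠ s in nhds t, s ∈ Set.Icc (t-δ) (t+δ) :=
    Filter.eventually_of_mem (Icc_mem_nhds (by linarith) (by linarith)) (fun s hs => hs)
  filter_upwards [hnn, hev1, hev1', hev2, hev3] with s hs1 hs2 hs2' hs3 hs4
  have ha : |deriv φ s| ≤ K1 * (s-t)^2 := by
    have := hquad1 s hs4
    rwa [h1, h2, sub_zero, zero_mul, sub_zero] at this
  have hb : |deriv φ s| ≤ 2 * Real.sqrt (K * φ s) := hgl s hs4 hs2'
  have hsq1 : Real.sqrt |deriv φ s| ≤ Real.sqrt K1 * |s - t| := by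
    calc Real.sqrt |deriv φ s| ≤ Real.sqrt (K1 * (s-t)^2) := Real.sqrt_le_sqrt ha
      _ = Real.sqrt K1 * |s - t| := by rw [Real.sqrt_mul hK1pos.le, Real.sqrt_sq_eq_abs]
  have hsq2 : Real.sqrt |deriv φ s| ≤ C * Real.sqrt (Real.sqrt (φ s)) := by
    calc Real.sqrt |deriv φ s| ≤ Real.sqrt (2 * Real.sqrt (K * φ s)) := Real.sqrt_le_sqrt hb
      _ = C * Real.sqrt (Real.sqrt (φ s)) := by
          rw [Real.sqrt_mul (by norm_num : (0:ℝ) ≤ 2), Real.sqrt_mul hKpos.le,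
            Real.sqrt_mul (Real.sqrt_nonneg K), hC]
          ring
  calc ‖deriv φ s * (Real.log (φ s) + 1)‖
      = |deriv φ s| * |Real.log (φ s) + 1| := by rw [Real.norm_eq_abs, abs_mul]
    _ ≤ |deriv φ s| * (1 + |Real.log (φ s)|) := by
        apply mul_le_mul_of_nonneg_left _ (abs_nonneg _)
        calc |Real.log (φ s) + 1| ≤ |Real.log (φ s)| + |(1:ℝ)| := abs_add_le _ _
          _ = 1 + |Real.log (φ s)| := by rw [abs_one]; ring
    _ = Real.sqrt |deriv φ s| * (Real.sqrt |deriv φ s| * (1 + |Real.log (φ s)|)) := by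
        rw [← mul_assoc, Real.mul_self_sqrt (abs_nonneg _)]
    _ ≤ (Real.sqrt K1 * |s - t|) *
        ((C * Real.sqrt (Real.sqrt (φ s))) * (1 + |Real.log (φ s)|)) := by
        apply mul_le_mul hsq1 _ (by positivity) (by positivity)
        apply mul_le_mul_of_nonneg_right hsq2
        positivity
    _ ≤ (Real.sqrt K1 * |s - t|) *
        (C * (Real.sqrt (Real.sqrt (φ s)) + 8 * Real.sqrt (Real.sqrt (Real.sqrt (φ s))))) := by
        apply mul_le_mul_of_nonneg_left _ (by positivity)
        rw [mul_assoc]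
        exact mul_le_mul_of_nonneg_left (qsqrt_log_bound hs1 hs2) hCpos.le
    _ ≤ (Real.sqrt K1 * |s - t|) * (c / Real.sqrt K1) := by
        apply mul_le_mul_of_nonneg_left hs3.le
        positivity
    _ = c * ‖s - t‖ := by
        rw [Real.norm_eq_abs]
        field_simp

/-- The core finite-dimensional inequality. -/
lemma core_ineq (S : Finset ℤ) (hS : S.Nonempty) (F F1 F2 G D : ℤ → ℝ)
    (hFpos : ∀ k, 0 ≤ F k)
    (hGpos : ∀ k, 0 ≤ G k)
    (hidA : ∀ k, F1 k = G (k-1) - G k)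
    (hidA2 : ∀ k, F2 k = D (k-1) - D k)
    (hfact7 : ∀ k, D k = G k * G (k-1) / F k - G (k+1) * G k / F (k+1))
    (hV2 : ∀ k, F k = 0 → G k = 0 ∧ G (k-1) = 0)
    (hVD : ∀ k, G k = 0 → D k = 0)
    (hoff : ∀ k, k ∉ S → F k = 0 ∧ F1 k = 0 ∧ F2 k = 0)
    (hsum2 : ∑ k ∈ S, F2 k = 0) :
    0 ≤ ∑ k ∈ S, (F2 k * (Real.log (F k) + 1) + (F1 k)^2 / F k) := by
  classical
  set a := S.min' hS with ha
  set b := S.max' hS with hbdef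
  -- support bounds
  have hFne : ∀ k, F k ≠ 0 → a ≤ k ∧ k ≤ b := by
    intro k hk
    have hkS : k ∈ S := by
      by_contra hc
      exact hk (hoff k hc).1
    exact ⟨S.min'_le k hkS, S.le_max' k hkS⟩
  have hsupG : ∀ k : ℤ, G k ≠ 0 → a ≤ k ∧ k ≤ b - 1 := by
    intro k hk
    have h1 : F k ≠ 0 := fun h0 => hk (hV2 k h0).1
    have h2 : F (k+1) ≠ 0 := by
      intro h0
      have := (hV2 (k+1) h0).2
      rw [add_sub_cancel_right] at this
      exact hk this
    have b1 := hFne k h1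
    have b2 := hFne (k+1) h2
    omega
  have hsupD : ∀ k : ℤ, D k ≠ 0 → a ≤ k ∧ k ≤ b - 1 := by
    intro k hk
    apply hsupG
    intro h0
    exact hk (hVD k h0)
  -- window
  set U : Finset ℤ := Finset.Icc (a-10) (b+10) with hU
  have hSU : S ⊆ U := by
    intro k hk
    rw [hU, Finset.mem_Icc]
    have h1 := S.min'_le k hk
    have h2 := S.le_max' k hk
    omega
  -- split the sum
  have e0 : ∀ k ∈ S, F2 k * (Real.log (F k) + 1) + (F1 k)^2 / F k
      = (F2 k * Real.log (F k) + (F1 k)^2 / F k) + F2 k := by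
    intro k _
    ring
  rw [Finset.sum_congr rfl e0, Finset.sum_add_distrib, hsum2, add_zero,
    Finset.sum_add_distrib]
  -- extend to the window U
  have hT1U : (∑ k ∈ S, F2 k * Real.log (F k)) = ∑ k ∈ U, F2 k * Real.log (F k) := by
    apply Finset.sum_subset hSU
    intro k _ hk
    rw [(hoff k hk).2.2, zero_mul]
  have hT2U : (∑ k ∈ S, (F1 k)^2 / F k) = ∑ k ∈ U, (F1 k)^2 / F k := by
    apply Finset.sum_subset hSU
    intro k _ hk
    rw [(hoff k hk).2.1]
    norm_num
  rw [hT1U, hT2U]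
  -- Abel summation for T1
  have habel1 : (∑ k ∈ U, F2 k * Real.log (F k))
      = (∑ k ∈ U, D k * Real.log (F (k+1))) - ∑ k ∈ U, D k * Real.log (F k) := by
    have e1 : ∀ k ∈ U, F2 k * Real.log (F k)
        = D (k-1) * Real.log (F k) - D k * Real.log (F k) := by
      intro k _
      rw [hidA2 k, sub_mul]
    rw [Finset.sum_congr rfl e1, Finset.sum_sub_distrib]
    congr 1
    have hsh := sum_shift_support (fun j => D j * Real.log (F (j+1))) (a-10) (b+10) (-1)
      ⟨by norm_num, by norm_num⟩
      (by
        intro j hj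
        have hDj : D j ≠ 0 := fun h0 => hj (by simp [h0])
        have := hsupD j hDj
        omega)
    have e2 : ∀ k ∈ U, D (k-1) * Real.log (F k)
        = (fun j => D j * Real.log (F (j+1))) (k + (-1)) := by
      intro k _
      simp only []
      rw [show k + (-1) = k - 1 by ring, show k - 1 + 1 = k by ring]
    rw [Finset.sum_congr rfl e2, hsh]
  -- substitute fact7, Abel again
  have habel2 : (∑ k ∈ U, D k * Real.log (F (k+1))) - (∑ k ∈ U, D k * Real.log (F k))
      = ∑ k ∈ U, (G (k+1) * G k / F (k+1))
          * (Real.log (F k) + Real.log (F (k+2)) - 2 * Real.log (F (k+1))) := by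
    have e1 : ∀ k ∈ U, D k * Real.log (F (k+1)) - D k * Real.log (F k)
        = (G k * G (k-1) / F k) * (Real.log (F (k+1)) - Real.log (F k))
          - (G (k+1) * G k / F (k+1)) * (Real.log (F (k+1)) - Real.log (F k)) := by
      intro k _
      rw [hfact7 k]
      ring
    rw [← Finset.sum_sub_distrib, Finset.sum_congr rfl e1, Finset.sum_sub_distrib]
    have hsh := sum_shift_support
      (fun j => (G (j+1) * G j / F (j+1)) * (Real.log (F (j+2)) - Real.log (F (j+1))))
      (a-10) (b+10) (-1) ⟨by norm_num, by norm_num⟩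
      (by
        intro j hj
        have hGj : G j ≠ 0 := fun h0 => hj (by simp [h0])
        have := hsupG j hGj
        omega)
    have e2 : ∀ k ∈ U, (G k * G (k-1) / F k) * (Real.log (F (k+1)) - Real.log (F k))
        = (fun j => (G (j+1) * G j / F (j+1)) * (Real.log (F (j+2)) - Real.log (F (j+1))))
            (k + (-1)) := by
      intro k _
      simp only []
      rw [show k + (-1) = k - 1 by ring, show k - 1 + 1 = k by ring,
        show k - 1 + 2 = k + 1 by ring]
    rw [Finset.sum_congr rfl e2, hsh, ← Finset.sum_sub_distrib]
    apply Finset.sum_congr rfl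
    intro k _
    ring
  rw [habel1, habel2]
  -- pointwise inequality
  have hineq : ∀ k ∈ U,
      2*(G (k+1) * G k / F (k+1)) - G k^2 / F k - G (k+1)^2 / F (k+2)
        ≤ (G (k+1) * G k / F (k+1))
          * (Real.log (F k) + Real.log (F (k+2)) - 2 * Real.log (F (k+1))) := by
    intro k _
    by_cases hGk : G k = 0
    · rw [hGk, mul_zero, zero_div, zero_mul]
      have h1 : 0 ≤ G k^2 / F k := div_nonneg (sq_nonneg _) (hFpos k)
      have h2 : 0 ≤ G (k+1)^2 / F (k+2) := div_nonneg (sq_nonneg _) (hFpos (k+2))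
      norm_num
      exact h2
    · by_cases hGk1 : G (k+1) = 0
      · rw [hGk1, zero_mul, zero_div, zero_mul]
        have h1 : 0 ≤ G k^2 / F k := div_nonneg (sq_nonneg _) (hFpos k)
        have h2 : 0 ≤ G (k+1)^2 / F (k+2) := div_nonneg (sq_nonneg _) (hFpos (k+2))
        norm_num
        exact h1
      · have hb : 0 < G k := (hGpos k).lt_of_ne (Ne.symm hGk)
        have hc : 0 < G (k+1) := (hGpos (k+1)).lt_of_ne (Ne.symm hGk1)
        have hp : 0 < F k := by
          rcases (hFpos k).lt_or_eq with h | h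
          · exact h
          · exact absurd (hV2 k h.symm).1 hGk
        have hq : 0 < F (k+1) := by
          rcases (hFpos (k+1)).lt_or_eq with h | h
          · exact h
          · exfalso
            have := (hV2 (k+1) h.symm).2
            rw [add_sub_cancel_right] at this
            exact hGk this
        have hr : 0 < F (k+2) := by
          rcases (hFpos (k+2)).lt_or_eq with h | h
          · exact h
          · exfalso
            have := (hV2 (k+2) h.symm).2
            rw [show k + 2 - 1 = k + 1 by ring] at this
            exact hGk1 this
        have := log_ineq hb hc hp hq hr
        have hcomm : G (k+1) * G k / F (k+1) = G k * G (k+1) / F (k+1) := by ring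
        rw [hcomm]
        linarith
  have hsumineq := Finset.sum_le_sum hineq
  -- the zero-sum identity
  have hzero : (∑ k ∈ U, (F1 k)^2 / F k)
      + (∑ k ∈ U, (2*(G (k+1) * G k / F (k+1)) - G k^2 / F k - G (k+1)^2 / F (k+2)))
      = 0 := by
    have sh1 : (∑ k ∈ U, G (k+1) * G k / F (k+1)) = ∑ k ∈ U, G k * G (k-1) / F k := by
      have hsh := sum_shift_support (fun j => G (j+1) * G j / F (j+1)) (a-10) (b+10) (-1)
        ⟨by norm_num, by norm_num⟩
        (by
          intro j hj
          have hGj : G j ≠ 0 := fun h0 => hj (by simp [h0])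
          have := hsupG j hGj
          omega)
      rw [← hsh]
      apply Finset.sum_congr rfl
      intro k _
      rw [show k + (-1) = k - 1 by ring, show k - 1 + 1 = k by ring]
    have sh2 : (∑ k ∈ U, G (k+1)^2 / F (k+2)) = ∑ k ∈ U, G (k-1)^2 / F k := by
      have hsh := sum_shift_support (fun j => G (j+1)^2 / F (j+2)) (a-10) (b+10) (-2)
        ⟨by norm_num, by norm_num⟩
        (by
          intro j hj
          have hGj : G (j+1) ≠ 0 := fun h0 => hj (by simp [h0])
          have := hsupG (j+1) hGj
          omega)
      rw [← hsh]
      apply Finset.sum_congr rfl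
      intro k _
      rw [show k + (-2) = k - 2 by ring, show k - 2 + 1 = k - 1 by ring,
        show k - 2 + 2 = k by ring]
    have hdist : (∑ k ∈ U, (2*(G (k+1) * G k / F (k+1)) - G k^2 / F k - G (k+1)^2 / F (k+2)))
        = 2*(∑ k ∈ U, G (k+1) * G k / F (k+1)) - (∑ k ∈ U, G k^2 / F k)
          - ∑ k ∈ U, G (k+1)^2 / F (k+2) := by
      rw [Finset.sum_sub_distrib, Finset.sum_sub_distrib, Finset.mul_sum]
    have hx : ∀ k ∈ U, (F1 k)^2 / F k
        = G k^2 / F k + G (k-1)^2 / F k - 2*(G k * G (k-1) / F k) := by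
      intro k _
      rw [hidA k]
      ring
    have hxsum : (∑ k ∈ U, (F1 k)^2 / F k)
        = (∑ k ∈ U, G k^2 / F k) + (∑ k ∈ U, G (k-1)^2 / F k)
          - 2*(∑ k ∈ U, G k * G (k-1) / F k) := by
      rw [Finset.sum_congr rfl hx, Finset.sum_sub_distrib, Finset.sum_add_distrib,
        ← Finset.mul_sum]
    rw [hdist, sh1, sh2]
    linarith [hxsum]
  linarith [hsumineq, hzero]

lemma interior_min_deriv {φ : ℝ → ℝ} {t : ℝ} (ht : t ∈ Set.Ioo (0:ℝ) 1)
    (hpos : ∀ s ∈ Set.Icc (0:ℝ) 1, 0 ≤ φ s) (h0 : φ t = 0) : deriv φ t = 0 := by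
  have hloc : IsLocalMin φ t := by
    have : ∀ᶠ s in nhds t, φ t ≤ φ s := by
      filter_upwards [Icc_mem_nhds ht.1 ht.2] with s hs
      rw [h0]
      exact hpos s hs
    exact this
  exact hloc.deriv_eq_zero

theorem entropy_convex_of_discrete_benamou_brenier
    (S : Finset ℤ) (f : ℝ → ℤ → ℝ)
    (hsmooth : ∀ k : ℤ, ContDiff ℝ (⊤ : ℕ∞) (fun t => f t k))
    (hnonneg : ∀ t ∈ Set.Icc (0 : ℝ) 1, ∀ k : ℤ, 0 ≤ f t k)
    (hsupp : ∀ (t : ℝ) (k : ℤ), k ∉ S → f t k = 0)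
    (hsum : ∀ t ∈ Set.Icc (0 : ℝ) 1, ∑ k ∈ S, f t k = 1)
    (g h : ℝ → ℤ → ℝ)
    (hg : ∀ (t : ℝ) (k : ℤ), g t k = -∑ l ∈ S.filter (· ≤ k), deriv (fun s => f s l) t)
    (hh : ∀ (t : ℝ) (k : ℤ), h t k = -∑ l ∈ S.filter (· ≤ k), deriv (fun s => g s l) t)
    (hBB : ∀ t ∈ Set.Icc (0 : ℝ) 1, ∀ k : ℤ, f t k * h t (k - 1) = g t k * g t (k - 1))
    (hgpos : ∀ t ∈ Set.Icc (0 : ℝ) 1, ∀ k : ℤ, 0 ≤ g t k) :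
    ConvexOn ℝ (Set.Icc (0 : ℝ) 1) (fun t => ∑ k ∈ S, f t k * Real.log (f t k)) := by
  classical
  -- S is nonempty
  rcases S.eq_empty_or_nonempty with hSe | hS
  · exfalso
    have := hsum 0 ⟨le_refl 0, zero_le_one⟩
    rw [hSe] at this
    simp at this
  -- smoothness
  have hsm : ∀ k, ContDiff ℝ (⊤:ℕ∞) (fun t => f t k) := fun k => (hsmooth k).of_le (by simp)
  have hsm1 : ∀ k, ContDiff ℝ (⊤:ℕ∞) (fun t => deriv (fun s => f s k) t) := fun k =>
    cd_deriv (hsm k)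
  have hgfun : ∀ k, (fun t => g t k)
      = fun t => -(∑ l ∈ S.filter (· ≤ k), deriv (fun s => f s l) t) :=
    fun k => funext fun t => hg t k
  have hsmg : ∀ k, ContDiff ℝ (⊤:ℕ∞) (fun t => g t k) := by
    intro k
    rw [hgfun k]
    exact (ContDiff.sum (fun l _ => hsm1 l)).neg
  -- vanishing off S
  have hoffF1 : ∀ k, k ∉ S → ∀ t, deriv (fun s => f s k) t = 0 := by
    intro k hk t
    have hz : (fun s => f s k) = (fun _ => (0:ℝ)) := funext fun s => hsupp s k hk
    rw [hz, deriv_const]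
  have hoffF2 : ∀ k, k ∉ S → ∀ t, deriv (fun s => deriv (fun u => f u k) s) t = 0 := by
    intro k hk t
    have hz : (fun s => deriv (fun u => f u k) s) = (fun _ => (0:ℝ)) :=
      funext fun s => hoffF1 k hk s
    rw [hz, deriv_const]
  -- identity A : f' k = g (k-1) - g k
  have idA : ∀ (t : ℝ) (k : ℤ), deriv (fun s => f s k) t = g t (k-1) - g t k := by
    intro t k
    have hstep := filter_sum_step S (fun l => deriv (fun s => f s l) t) k
    have h2 : g t (k-1) - g t k
        = (∑ l ∈ S.filter (· ≤ k), deriv (fun s => f s l) t)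
          - ∑ l ∈ S.filter (· ≤ k - 1), deriv (fun s => f s l) t := by
      rw [hg t k, hg t (k-1)]
      ring
    rw [h2, hstep]
    by_cases hk : k ∈ S
    · rw [if_pos hk]
    · rw [if_neg hk, hoffF1 k hk t]
  -- identity A' : f'' k = g' (k-1) - g' k
  have idA2 : ∀ (t : ℝ) (k : ℤ), deriv (fun s => deriv (fun u => f u k) s) t
      = deriv (fun s => g s (k-1)) t - deriv (fun s => g s k) t := by
    intro t k
    have hfeq : (fun s => deriv (fun u => f u k) s) = (fun s => g s (k-1) - g s k) :=
      funext fun s => idA s k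
    rw [hfeq]
    exact (((cd_diff (hsmg (k-1)) t).hasDerivAt).sub ((cd_diff (hsmg k) t).hasDerivAt)).deriv
  -- identity B : for k ∈ S, g' k = h (k-1) - h k
  have idB : ∀ (t : ℝ) (k : ℤ), k ∈ S → deriv (fun s => g s k) t = h t (k-1) - h t k := by
    intro t k hk
    have hstep := filter_sum_step S (fun l => deriv (fun s => g s l) t) k
    have h2 : h t (k-1) - h t k
        = (∑ l ∈ S.filter (· ≤ k), deriv (fun s => g s l) t)
          - ∑ l ∈ S.filter (· ≤ k - 1), deriv (fun s => g s l) t := by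
      rw [hh t k, hh t (k-1)]
      ring
    rw [h2, hstep, if_pos hk]
  -- vanishing lemmas at interior zeros
  have hV1 : ∀ t ∈ Set.Ioo (0:ℝ) 1, ∀ k, f t k = 0 → deriv (fun s => f s k) t = 0 := by
    intro t ht k h0
    exact interior_min_deriv ht (fun s hs => hnonneg s hs k) h0
  have hV2 : ∀ t ∈ Set.Ioo (0:ℝ) 1, ∀ k, f t k = 0 → g t k = 0 ∧ g t (k-1) = 0 := by
    intro t ht k h0
    have h1 := idA t k
    rw [hV1 t ht k h0] at h1
    have h2 := hBB t ⟨ht.1.le, ht.2.le⟩ k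
    rw [h0, zero_mul] at h2
    have h3 : g t (k-1) = g t k := by linarith
    rw [h3] at h2
    have h4 : g t k = 0 := by
      have := mul_self_eq_zero.mp h2.symm
      exact this
    exact ⟨h4, by rw [h3, h4]⟩
  have hV3 : ∀ t ∈ Set.Ioo (0:ℝ) 1, ∀ k, g t k = 0 → deriv (fun s => g s k) t = 0 := by
    intro t ht k h0
    exact interior_min_deriv ht (fun s hs => hgpos s hs k) h0
  have hV4 : ∀ t ∈ Set.Ioo (0:ℝ) 1, ∀ k, f t k = 0 →
      deriv (fun s => deriv (fun u => f u k) s) t = 0 := by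
    intro t ht k h0
    rw [idA2 t k, hV3 t ht k ((hV2 t ht k h0).1), hV3 t ht (k-1) ((hV2 t ht k h0).2), sub_zero]
  -- fact7 : g' k = g k * g (k-1) / f k - g (k+1) * g k / f (k+1)
  have fact7 : ∀ t ∈ Set.Ioo (0:ℝ) 1, ∀ k, deriv (fun s => g s k) t
      = g t k * g t (k-1) / f t k - g t (k+1) * g t k / f t (k+1) := by
    intro t ht k
    by_cases hfk : f t k = 0
    · have h1 := hV2 t ht k hfk
      rw [hV3 t ht k h1.1, h1.1, h1.2]
      simp
    · by_cases hfk1 : f t (k+1) = 0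
      · have h1 := hV2 t ht (k+1) hfk1
        rw [add_sub_cancel_right] at h1
        rw [hV3 t ht k h1.2, h1.1, h1.2]
        simp
      · have hkS : k ∈ S := by
          by_contra hk
          exact hfk (hsupp t k hk)
        have hB1 := hBB t ⟨ht.1.le, ht.2.le⟩ k
        have hB2 := hBB t ⟨ht.1.le, ht.2.le⟩ (k+1)
        rw [add_sub_cancel_right] at hB2
        have e1 : h t (k-1) = g t k * g t (k-1) / f t k := by
          rw [eq_div_iff hfk]
          linarith [hB1]
        have e2 : h t k = g t (k+1) * g t k / f t (k+1) := by
          rw [eq_div_iff hfk1]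
          linarith [hB2]
        rw [idB t k hkS, e1, e2]
  -- derivative sums of the constant mass
  have hsum1 : ∀ t ∈ Set.Ioo (0:ℝ) 1, ∑ k ∈ S, deriv (fun s => f s k) t = 0 := by
    intro t ht
    have hha : HasDerivAt (fun s => ∑ k ∈ S, f s k) (∑ k ∈ S, deriv (fun s => f s k) t) t :=
      HasDerivAt.fun_sum (fun k _ => (cd_diff (hsm k) t).hasDerivAt)
    have he : (fun s => ∑ k ∈ S, f s k) =ᶠ[nhds t] (fun _ => (1:ℝ)) := by
      filter_upwards [Ioo_mem_nhds ht.1 ht.2] with s hs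
      exact hsum s ⟨hs.1.le, hs.2.le⟩
    rw [← hha.deriv, he.deriv_eq, deriv_const]
  have hsum2 : ∀ t ∈ Set.Ioo (0:ℝ) 1,
      ∑ k ∈ S, deriv (fun s => deriv (fun u => f u k) s) t = 0 := by
    intro t ht
    have hha : HasDerivAt (fun s => ∑ k ∈ S, deriv (fun u => f u k) s)
        (∑ k ∈ S, deriv (fun s => deriv (fun u => f u k) s) t) t :=
      HasDerivAt.fun_sum (fun k _ => (cd_diff (hsm1 k) t).hasDerivAt)
    have he : (fun s => ∑ k ∈ S, deriv (fun u => f u k) s) =ᶠ[nhds t] (fun _ => (0:ℝ)) := by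
      filter_upwards [Ioo_mem_nhds ht.1 ht.2] with s hs
      exact hsum1 s hs
    rw [← hha.deriv, he.deriv_eq, deriv_const]
  -- the key second-derivative inequality
  have key : ∀ t ∈ Set.Ioo (0:ℝ) 1,
      0 ≤ ∑ k ∈ S, (deriv (fun s => deriv (fun u => f u k) s) t * (Real.log (f t k) + 1)
        + (deriv (fun s => f s k) t)^2 / f t k) := by
    intro t ht
    exact core_ineq S hS (fun k => f t k)
      (fun k => deriv (fun s => f s k) t)
      (fun k => deriv (fun s => deriv (fun u => f u k) s) t)
      (fun k => g t k)
      (fun k => deriv (fun s => g s k) t)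
      (fun k => hnonneg t ⟨ht.1.le, ht.2.le⟩ k)
      (fun k => hgpos t ⟨ht.1.le, ht.2.le⟩ k)
      (fun k => idA t k)
      (fun k => idA2 t k)
      (fun k => fact7 t ht k)
      (fun k => hV2 t ht k)
      (fun k => hV3 t ht k)
      (fun k hk => ⟨hsupp t k hk, hoffF1 k hk t, hoffF2 k hk t⟩)
      (hsum2 t ht)
  -- first derivative of the entropy
  have hD1 : ∀ t ∈ Set.Ioo (0:ℝ) 1,
      HasDerivAt (fun s => ∑ k ∈ S, f s k * Real.log (f s k))
        (∑ k ∈ S, deriv (fun u => f u k) t * (Real.log (f t k) + 1)) t := by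
    intro t ht
    apply HasDerivAt.fun_sum
    intro k _
    have hev : ∀ᶠ s in nhds t, 0 ≤ f s k := by
      filter_upwards [Icc_mem_nhds ht.1 ht.2] with s hs
      exact hnonneg s hs k
    by_cases h0 : f t k = 0
    · have hz1 : deriv (fun u => f u k) t = 0 := hV1 t ht k h0
      rw [hz1, zero_mul]
      exact hasDerivAt_mul_log_zero (hsm k) h0 hz1 hev
    · have hfd : HasDerivAt (fun s => f s k) (deriv (fun u => f u k) t) t :=
        (cd_diff (hsm k) t).hasDerivAt
      have hlog : HasDerivAt (fun s => Real.log (f s k))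
          (deriv (fun u => f u k) t / f t k) t := hfd.log h0
      have hmul := hfd.fun_mul hlog
      refine hmul.congr_deriv ?_
      field_simp
  -- second derivative of the entropy
  have hD2 : ∀ t ∈ Set.Ioo (0:ℝ) 1,
      HasDerivAt (fun s => ∑ k ∈ S, deriv (fun u => f u k) s * (Real.log (f s k) + 1))
        (∑ k ∈ S, (deriv (fun s => deriv (fun u => f u k) s) t * (Real.log (f t k) + 1)
          + (deriv (fun s => f s k) t)^2 / f t k)) t := by
    intro t ht
    apply HasDerivAt.fun_sum
    intro k _
    have hev : ∀ᶠ s in nhds t, 0 ≤ f s k := by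
      filter_upwards [Icc_mem_nhds ht.1 ht.2] with s hs
      exact hnonneg s hs k
    by_cases h0 : f t k = 0
    · have hz1 : deriv (fun u => f u k) t = 0 := hV1 t ht k h0
      have hz2 : deriv (fun s => deriv (fun u => f u k) s) t = 0 := hV4 t ht k h0
      rw [hz1, hz2, zero_mul]
      norm_num
      exact hasDerivAt_dmul_log_zero (hsm k) h0 hz1 hz2 hev
    · have hfd : HasDerivAt (fun s => f s k) (deriv (fun u => f u k) t) t :=
        (cd_diff (hsm k) t).hasDerivAt
      have hfd1 : HasDerivAt (fun s => deriv (fun u => f u k) s)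
          (deriv (fun s => deriv (fun u => f u k) s) t) t :=
        (cd_diff (hsm1 k) t).hasDerivAt
      have hlog : HasDerivAt (fun s => Real.log (f s k) + 1)
          (deriv (fun u => f u k) t / f t k) t := (hfd.log h0).add_const 1
      have hmul := hfd1.fun_mul hlog
      refine hmul.congr_deriv ?_
      field_simp
  -- conclude convexity
  apply convexOn_of_deriv2_nonneg (convex_Icc 0 1)
  · apply Continuous.continuousOn
    apply continuous_finset_sum
    intro k _
    exact Real.continuous_mul_log.comp (hsm k).continuous
  · rw [interior_Icc]
    intro t ht
    exact (hD1 t ht).differentiableAt.differentiableWithinAt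
  · rw [interior_Icc]
    intro t ht
    have hEE : deriv (fun s => ∑ k ∈ S, f s k * Real.log (f s k))
        =ᶠ[nhds t] (fun s => ∑ k ∈ S, deriv (fun u => f u k) s * (Real.log (f s k) + 1)) := by
      filter_upwards [Ioo_mem_nhds ht.1 ht.2] with s hs
      exact (hD1 s hs).deriv
    exact ((hD2 t ht).differentiableAt.congr_of_eventuallyEq hEE).differentiableWithinAt
  · rw [interior_Icc]
    intro t ht
    have hEE : deriv (fun s => ∑ k ∈ S, f s k * Real.log (f s k))
        =ᶠ[nhds t] (fun s => ∑ k ∈ S, deriv (fun u => f u k) s * (Real.log (f s k) + 1)) := by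
      filter_upwards [Ioo_mem_nhds ht.1 ht.2] with s hs
      exact (hD1 s hs).deriv
    have h2 : deriv^[2] (fun s => ∑ k ∈ S, f s k * Real.log (f s k)) t
        = deriv (deriv (fun s => ∑ k ∈ S, f s k * Real.log (f s k))) t := by
      rw [Function.iterate_succ, Function.iterate_one]
      rfl
    rw [h2, hEE.deriv_eq, (hD2 t ht).deriv]
    exact key t ht
end
end

section
/- Let f₀, f₁ be finitely supported probability distributions on a metric space (X,d) and let C(f₀,f₁) be the union of supports of all W₁-optimal couplings. If (x₀,y₀), …, (x_p,y_p) ∈ C(f₀,f₁), then Σ_{i=0}^p d(x_i,y_i) ≤ d(x₀,y_p) + Σ_{i=0}^{p−1} d(x_{i+1},y_i). -/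
open scoped BigOperators Classical

noncomputable section

variable {X : Type*} [MetricSpace X]

/-- π is a coupling of the finitely supported distributions f₀ and f₁. -/
def IsCoupling (f₀ f₁ : X →₀ ℝ) (π : X × X →₀ ℝ) : Prop :=
  (∀ p, 0 ≤ π p) ∧
    (∀ x, (π.sum fun p v => if p.1 = x then v else 0) = f₀ x) ∧
    (∀ y, (π.sum fun p v => if p.2 = y then v else 0) = f₁ y)

/-- Transport cost of a coupling. -/
def cost (π : X × X →₀ ℝ) : ℝ := π.sum fun p v => dist p.1 p.2 * v

/-- π is a W₁-optimal coupling of f₀ and f₁. -/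
def IsOptimalCoupling (f₀ f₁ : X →₀ ℝ) (π : X × X →₀ ℝ) : Prop :=
  IsCoupling f₀ f₁ π ∧ ∀ π', IsCoupling f₀ f₁ π' → cost π ≤ cost π'

/-- C(f₀,f₁): union of the supports of all W₁-optimal couplings. -/
def commonSupport (f₀ f₁ : X →₀ ℝ) : Set (X × X) :=
  {p | ∃ π, IsOptimalCoupling f₀ f₁ π ∧ 0 < π p}

/-- f is a (finitely supported) probability distribution. -/
def IsProb (f : X →₀ ℝ) : Prop := (∀ x, 0 ≤ f x) ∧ (f.sum fun _ v => v) = 1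

/-!
Averaging finitely many optimal couplings gives an optimal coupling `π` charging every pair
`(xᵢ, yᵢ)`. Moving a small mass `ε` from the pairs `(xᵢ, yᵢ)` to the cyclically shifted pairs
`(x₀, y_p), (xᵢ₊₁, yᵢ)` keeps both marginals and, for `ε` small, positivity; optimality of `π`
then says that the shift does not decrease the cost.
-/

open Finset Filter Topology

section Finsupp

variable {α β : Type*}

theorem Finsupp.mapDomain_apply_eq_sum_ite {M : Type*} [AddCommMonoid M] [DecidableEq β]
    (f : α → β) (v : α →₀ M) (b : β) :
    v.mapDomain f b = v.sum fun a m => if f a = b then m else 0 := by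
  simp only [Finsupp.mapDomain, Finsupp.sum_apply, Finsupp.single_apply]

theorem Finsupp.exists_pos_forall_nonneg_add_mul (π D : α →₀ ℝ) (hπ : ∀ a, 0 ≤ π a)
    (hD : ∀ a, D a < 0 → 0 < π a) : ∃ ε > 0, ∀ a, 0 ≤ π a + ε * D a := by
  have hsmall : ∀ᶠ ε in 𝓝[>] (0 : ℝ), ∀ a ∈ D.support, 0 ≤ π a + ε * D a := by
    refine (eventually_all_finset _).2 fun a _ => ?_
    rcases lt_or_ge (D a) 0 with hneg | hnonneg
    · have hlim : Tendsto (fun ε : ℝ => π a + ε * D a) (𝓝 0) (𝓝 (π a)) := by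
        simpa using ((tendsto_id (x := 𝓝 (0 : ℝ))).mul_const (D a)).const_add (π a)
      exact nhdsWithin_le_nhds ((hlim.eventually (lt_mem_nhds (hD a hneg))).mono
        fun _ h => h.le)
    · filter_upwards [self_mem_nhdsWithin] with ε hε
      have := hπ a
      have : 0 ≤ ε * D a := mul_nonneg (le_of_lt hε) hnonneg
      linarith
  obtain ⟨ε, hε, hpos⟩ := (hsmall.and self_mem_nhdsWithin).exists
  refine ⟨ε, hpos, fun a => ?_⟩
  by_cases ha : a ∈ D.support
  · exact hε a ha
  · simpa [Finsupp.notMem_support_iff.1 ha] using hπ a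

end Finsupp

section CyclicShift

variable {α : Type*}

def diagonalPairs (x y : ℕ → α) (p : ℕ) : α × α →₀ ℝ :=
  ∑ i ∈ range (p + 1), Finsupp.single (x i, y i) 1

def shiftedPairs (x y : ℕ → α) (p : ℕ) : α × α →₀ ℝ :=
  Finsupp.single (x 0, y p) 1 + ∑ i ∈ range p, Finsupp.single (x (i + 1), y i) 1

theorem mapDomain_fst_shiftedPairs (x y : ℕ → α) (p : ℕ) :
    (shiftedPairs x y p).mapDomain Prod.fst = (diagonalPairs x y p).mapDomain Prod.fst := by
  simp only [shiftedPairs, diagonalPairs, Finsupp.mapDomain_add, Finsupp.mapDomain_finsetSum,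
    Finsupp.mapDomain_single, sum_range_succ' _ p, add_comm]

theorem mapDomain_snd_shiftedPairs (x y : ℕ → α) (p : ℕ) :
    (shiftedPairs x y p).mapDomain Prod.snd = (diagonalPairs x y p).mapDomain Prod.snd := by
  simp only [shiftedPairs, diagonalPairs, Finsupp.mapDomain_add, Finsupp.mapDomain_finsetSum,
    Finsupp.mapDomain_single, sum_range_succ _ p, add_comm]

theorem mem_image_of_shiftedPairs_sub_diagonalPairs_neg {x y : ℕ → α} {p : ℕ} {q : α × α}
    (hq : (shiftedPairs x y p - diagonalPairs x y p) q < 0) :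
    q ∈ (range (p + 1)).image fun i => (x i, y i) := by
  by_contra hnot
  have hdiag : diagonalPairs x y p q = 0 := by
    simp only [diagonalPairs, Finsupp.finsetSum_apply, Finsupp.single_apply]
    exact sum_eq_zero fun i hi => if_neg fun h => hnot (mem_image.2 ⟨i, hi, h⟩)
  have hshift : 0 ≤ shiftedPairs x y p q := by
    simp only [shiftedPairs, Finsupp.add_apply, Finsupp.finsetSum_apply, Finsupp.single_apply]
    positivity
  rw [Finsupp.sub_apply, hdiag] at hq
  linarith

end CyclicShift

theorem isCoupling_iff {α : Type*} (f₀ f₁ : α →₀ ℝ) (π : α × α →₀ ℝ) :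
    IsCoupling f₀ f₁ π ↔
      (∀ q, 0 ≤ π q) ∧ π.mapDomain Prod.fst = f₀ ∧ π.mapDomain Prod.snd = f₁ := by
  simp only [IsCoupling, Finsupp.ext_iff, Finsupp.mapDomain_apply_eq_sum_ite]

theorem cost_eq_linearCombination (π : X × X →₀ ℝ) :
    cost π = Finsupp.linearCombination ℝ (fun q : X × X => dist q.1 q.2) π := by
  rw [cost, Finsupp.linearCombination_apply]
  exact Finsupp.sum_congr fun _ _ => mul_comm _ _

theorem cost_add (π π' : X × X →₀ ℝ) : cost (π + π') = cost π + cost π' := by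
  simp only [cost_eq_linearCombination, map_add]

theorem cost_sub (π π' : X × X →₀ ℝ) : cost (π - π') = cost π - cost π' := by
  simp only [cost_eq_linearCombination, map_sub]

theorem cost_smul (c : ℝ) (π : X × X →₀ ℝ) : cost (c • π) = c * cost π := by
  simp only [cost_eq_linearCombination, map_smul, smul_eq_mul]

theorem cost_diagonalPairs (x y : ℕ → X) (p : ℕ) :
    cost (diagonalPairs x y p) = ∑ i ∈ range (p + 1), dist (x i) (y i) := by
  simp [cost_eq_linearCombination, diagonalPairs, map_sum]

theorem cost_shiftedPairs (x y : ℕ → X) (p : ℕ) :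
    cost (shiftedPairs x y p) = dist (x 0) (y p) + ∑ i ∈ range p, dist (x (i + 1)) (y i) := by
  simp [cost_eq_linearCombination, shiftedPairs, map_sum]

theorem isOptimalCoupling_sum_smul {ι : Type*} {f₀ f₁ : X →₀ ℝ} (s : Finset ι) (w : ι → ℝ)
    (π : ι → X × X →₀ ℝ) (hw : ∀ i ∈ s, 0 ≤ w i) (hw₁ : ∑ i ∈ s, w i = 1)
    (hπ : ∀ i ∈ s, IsOptimalCoupling f₀ f₁ (π i)) :
    IsOptimalCoupling f₀ f₁ (∑ i ∈ s, w i • π i) := by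
  have hcoup : ∀ i ∈ s, (∀ q, 0 ≤ π i q) ∧ (π i).mapDomain Prod.fst = f₀ ∧
      (π i).mapDomain Prod.snd = f₁ := fun i hi => (isCoupling_iff f₀ f₁ (π i)).1 (hπ i hi).1
  have hmarg (f : X × X → X) (g : X →₀ ℝ) (hg : ∀ i ∈ s, (π i).mapDomain f = g) :
      (∑ i ∈ s, w i • π i).mapDomain f = g := by
    simp only [Finsupp.mapDomain_finsetSum, Finsupp.mapDomain_smul]
    rw [sum_congr rfl fun i hi => by rw [hg i hi], ← sum_smul, hw₁, one_smul]
  refine ⟨(isCoupling_iff _ _ _).2 ⟨fun q => ?_, hmarg _ _ fun i hi => (hcoup i hi).2.1,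
    hmarg _ _ fun i hi => (hcoup i hi).2.2⟩, fun π' hπ' => ?_⟩
  · simp only [Finsupp.finsetSum_apply, Finsupp.smul_apply, smul_eq_mul]
    exact sum_nonneg fun i hi => mul_nonneg (hw i hi) ((hcoup i hi).1 q)
  · calc cost (∑ i ∈ s, w i • π i) = ∑ i ∈ s, w i * cost (π i) := by
          simp [cost_eq_linearCombination, map_sum]
      _ ≤ ∑ i ∈ s, w i * cost π' :=
          sum_le_sum fun i hi => mul_le_mul_of_nonneg_left ((hπ i hi).2 π' hπ') (hw i hi)
      _ = cost π' := by rw [← sum_mul, hw₁, one_mul]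

theorem exists_isOptimalCoupling_forall_pos {f₀ f₁ : X →₀ ℝ} (s : Finset (X × X))
    (hs : s.Nonempty) (hsub : ∀ q ∈ s, q ∈ commonSupport f₀ f₁) :
    ∃ π, IsOptimalCoupling f₀ f₁ π ∧ ∀ q ∈ s, 0 < π q := by
  choose! π hπ hpos using hsub
  have hcard : (0 : ℝ) < #s := by exact_mod_cast hs.card_pos
  refine ⟨∑ q ∈ s, (#s : ℝ)⁻¹ • π q, isOptimalCoupling_sum_smul s _ π
    (fun _ _ => by positivity) (by simp [hcard.ne']) hπ, fun q hq => ?_⟩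
  simp only [Finsupp.finsetSum_apply, Finsupp.smul_apply, smul_eq_mul, ← mul_sum]
  have hnonneg : ∀ r ∈ s, 0 ≤ π r q := fun r hr => ((isCoupling_iff _ _ _).1 (hπ r hr).1).1 q
  exact mul_pos (inv_pos.2 hcard) (sum_pos' hnonneg ⟨q, hq, hpos q hq⟩)

theorem IsOptimalCoupling.cost_nonneg {f₀ f₁ : X →₀ ℝ} {π : X × X →₀ ℝ}
    (hπ : IsOptimalCoupling f₀ f₁ π) (D : X × X →₀ ℝ) (hD₀ : D.mapDomain Prod.fst = 0)
    (hD₁ : D.mapDomain Prod.snd = 0) (hneg : ∀ q, D q < 0 → 0 < π q) : 0 ≤ cost D := by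
  obtain ⟨hnonneg, hfst, hsnd⟩ := (isCoupling_iff _ _ _).1 hπ.1
  obtain ⟨ε, hε, hpert⟩ := Finsupp.exists_pos_forall_nonneg_add_mul π D hnonneg hneg
  have hcoup : IsCoupling f₀ f₁ (π + ε • D) := by
    refine (isCoupling_iff _ _ _).2 ⟨fun q => by simpa using hpert q, ?_, ?_⟩ <;>
      simp [Finsupp.mapDomain_add, Finsupp.mapDomain_smul, hD₀, hD₁, hfst, hsnd]
  have hle := hπ.2 _ hcoup
  rw [cost_add, cost_smul] at hle
  exact nonneg_of_mul_nonneg_right (by linarith) hε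

theorem cyclic_monotonicity_of_common_support_general
    (f₀ f₁ : X →₀ ℝ)
    (p : ℕ) (x y : ℕ → X)
    (hmem : ∀ i ≤ p, (x i, y i) ∈ commonSupport f₀ f₁) :
    ∑ i ∈ Finset.range (p + 1), dist (x i) (y i) ≤
      dist (x 0) (y p) + ∑ i ∈ Finset.range p, dist (x (i + 1)) (y i) := by
  obtain ⟨π, hπ, hpos⟩ := exists_isOptimalCoupling_forall_pos
    ((range (p + 1)).image fun i => (x i, y i)) (by simp)
    (by simpa [Nat.lt_succ_iff] using hmem)
  have hshift := hπ.cost_nonneg (shiftedPairs x y p - diagonalPairs x y p)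
    (by rw [Finsupp.mapDomain_sub, mapDomain_fst_shiftedPairs, sub_self])
    (by rw [Finsupp.mapDomain_sub, mapDomain_snd_shiftedPairs, sub_self])
    fun q hq => hpos q (mem_image_of_shiftedPairs_sub_diagonalPairs_neg hq)
  rw [cost_sub, cost_shiftedPairs, cost_diagonalPairs] at hshift
  linarith

theorem cyclic_monotonicity_of_common_support
    (f₀ f₁ : X →₀ ℝ) (h₀ : IsProb f₀) (h₁ : IsProb f₁)
    (p : ℕ) (x y : ℕ → X)
    (hmem : ∀ i ≤ p, (x i, y i) ∈ commonSupport f₀ f₁) :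
    ∑ i ∈ Finset.range (p + 1), dist (x i) (y i) ≤
      dist (x 0) (y p) + ∑ i ∈ Finset.range p, dist (x (i + 1)) (y i) :=
  cyclic_monotonicity_of_common_support_general f₀ f₁ p x y hmem
end
end

section
/- Let (f_t) be a W₁,₊-geodesic on an oriented graph G, with flux g_t > 0, and define the velocity field v₊,t(x₀x₁) = g_t(x₀x₁)/f_t(x₀) and the velocity function V₊,t(x₁) = Σ_{x₂∈F(x₁)} v₊,t(x₁x₂). Then ∂/∂t v₊,t(x₀x₁) = −v₊,t(x₀x₁)·[V₊,t(x₁) − V₊,t(x₀)]. -/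
/-!
Write `V₊(x) = ∑_{y ∈ F(x)} g(xy)/f(x)` and `V₋(x) = ∑_{z ∈ E(x)} g(zx)/f(x)`. The continuity
equation reads `∂f(x₀) = -f(x₀) (V₊(x₀) - V₋(x₀))`, and the Benamou–Brenier equation
`h(x₀x₁x₂) = g(x₀x₁) g(x₁x₂) / f(x₁)` turns the second equation into
`∂g(x₀x₁) = -g(x₀x₁) (V₊(x₁) - V₋(x₀))`. Both `f(x₀)` and `g(x₀x₁)` thus have a logarithmic
derivative, and in that of the quotient `g(x₀x₁)/f(x₀)` the inflow term `V₋(x₀)` cancels.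
-/

open scoped BigOperators Classical

noncomputable section

theorem HasDerivAt.div_of_hasDerivAt_mul {u w : ℝ → ℝ} {a b t : ℝ}
    (hu : HasDerivAt u (u t * a) t) (hw : HasDerivAt w (w t * b) t) (hwt : w t ≠ 0) :
    HasDerivAt (fun s => u s / w s) (u t / w t * (a - b)) t :=
  (hu.div hw hwt).congr_deriv (by field_simp)

namespace OrientedGraph

variable {V : Type*} [Fintype V] (R : V → V → Prop)

def outVelocity (f : V → ℝ) (g : V → V → ℝ) (x : V) : ℝ :=
  ∑ y, if R x y then g x y / f x else 0

def inVelocity (f : V → ℝ) (g : V → V → ℝ) (x : V) : ℝ :=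
  ∑ z, if R z x then g z x / f x else 0

variable {R}

theorem outflow_eq_mul_outVelocity {f : V → ℝ} (g : V → V → ℝ) {x : V} (hfx : f x ≠ 0) :
    (∑ y, if R x y then g x y else 0) = f x * outVelocity R f g x := by
  simp only [outVelocity, Finset.mul_sum, mul_ite, mul_zero, mul_div_cancel₀ _ hfx]

theorem inflow_eq_mul_inVelocity {f : V → ℝ} (g : V → V → ℝ) {x : V} (hfx : f x ≠ 0) :
    (∑ z, if R z x then g z x else 0) = f x * inVelocity R f g x := by
  simp only [inVelocity, Finset.mul_sum, mul_ite, mul_zero, mul_div_cancel₀ _ hfx]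

section BenamouBrenier

variable {f : V → ℝ} {g : V → V → ℝ} {h : V → V → V → ℝ}
  (hf : ∀ x, f x ≠ 0)
  (hBB : ∀ x₀ x₁ x₂, R x₀ x₁ → R x₁ x₂ → f x₁ * h x₀ x₁ x₂ = g x₀ x₁ * g x₁ x₂)
include hf hBB

theorem triple_outflow_eq_mul_outVelocity {x₀ x₁ : V} (hx : R x₀ x₁) :
    (∑ w, if R x₁ w then h x₀ x₁ w else 0) = g x₀ x₁ * outVelocity R f g x₁ := by
  simp only [outVelocity, Finset.mul_sum, mul_ite, mul_zero]
  refine Finset.sum_congr rfl fun w _ => if_ctx_congr Iff.rfl (fun hw => ?_) fun _ => rfl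
  rw [← mul_div_assoc, eq_div_iff (hf x₁), ← hBB x₀ x₁ w hx hw, mul_comm]

theorem triple_inflow_eq_mul_inVelocity {x₀ x₁ : V} (hx : R x₀ x₁) :
    (∑ z, if R z x₀ then h z x₀ x₁ else 0) = g x₀ x₁ * inVelocity R f g x₀ := by
  simp only [inVelocity, Finset.mul_sum, mul_ite, mul_zero]
  refine Finset.sum_congr rfl fun z _ => if_ctx_congr Iff.rfl (fun hz => ?_) fun _ => rfl
  rw [← mul_div_assoc, eq_div_iff (hf x₀), mul_comm (g x₀ x₁), ← hBB z x₀ x₁ hz hx, mul_comm]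

end BenamouBrenier

end OrientedGraph

open OrientedGraph

theorem velocity_field_evolution_general
    {V : Type*} [Fintype V] (R : V → V → Prop)
    (f : ℝ → V → ℝ) (g : ℝ → V → V → ℝ) (h : ℝ → V → V → V → ℝ)
    (hfpos : ∀ t x, 0 < f t x)
    (hf : ∀ t x, HasDerivAt (fun s => f s x)
      (-((∑ y, if R x y then g t x y else 0) - ∑ z, if R z x then g t z x else 0)) t)
    (hg : ∀ t x y, R x y → HasDerivAt (fun s => g s x y)
      (-((∑ w, if R y w then h t x y w else 0) - ∑ z, if R z x then h t z x y else 0)) t)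
    (hBB : ∀ t x₀ x₁ x₂, R x₀ x₁ → R x₁ x₂ →
      f t x₁ * h t x₀ x₁ x₂ = g t x₀ x₁ * g t x₁ x₂)
    (t : ℝ) (x₀ x₁ : V) (hx : R x₀ x₁) :
    HasDerivAt (fun s => g s x₀ x₁ / f s x₀)
      (-(g t x₀ x₁ / f t x₀) *
        ((∑ x₂, if R x₁ x₂ then g t x₁ x₂ / f t x₁ else 0) -
          ∑ x₂, if R x₀ x₂ then g t x₀ x₂ / f t x₀ else 0)) t := by
  have hft : ∀ x, f t x ≠ 0 := fun x => (hfpos t x).ne'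
  have hdensity : HasDerivAt (fun s => f s x₀)
      (f t x₀ * -(outVelocity R (f t) (g t) x₀ - inVelocity R (f t) (g t) x₀)) t := by
    convert hf t x₀ using 1
    rw [outflow_eq_mul_outVelocity _ (hft x₀), inflow_eq_mul_inVelocity _ (hft x₀)]
    ring
  have hflux : HasDerivAt (fun s => g s x₀ x₁)
      (g t x₀ x₁ * -(outVelocity R (f t) (g t) x₁ - inVelocity R (f t) (g t) x₀)) t := by
    convert hg t x₀ x₁ hx using 1
    rw [triple_outflow_eq_mul_outVelocity hft (hBB t) hx,
      triple_inflow_eq_mul_inVelocity hft (hBB t) hx]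
    ring
  exact (hflux.div_of_hasDerivAt_mul hdensity (hft x₀)).congr_deriv (by
    simp only [outVelocity]; ring)

theorem velocity_field_evolution
    {V : Type*} [Fintype V] (R : V → V → Prop)
    (f : ℝ → V → ℝ) (g : ℝ → V → V → ℝ) (h : ℝ → V → V → V → ℝ)
    (hfpos : ∀ t x, 0 < f t x)
    (hgpos : ∀ t x y, R x y → 0 < g t x y)
    (hf : ∀ t x, HasDerivAt (fun s => f s x)
      (-((∑ y, if R x y then g t x y else 0) - ∑ z, if R z x then g t z x else 0)) t)
    (hg : ∀ t x y, R x y → HasDerivAt (fun s => g s x y)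
      (-((∑ w, if R y w then h t x y w else 0) - ∑ z, if R z x then h t z x y else 0)) t)
    (hBB : ∀ t x₀ x₁ x₂, R x₀ x₁ → R x₁ x₂ →
      f t x₁ * h t x₀ x₁ x₂ = g t x₀ x₁ * g t x₁ x₂)
    (t : ℝ) (x₀ x₁ : V) (hx : R x₀ x₁) :
    HasDerivAt (fun s => g s x₀ x₁ / f s x₀)
      (-(g t x₀ x₁ / f t x₀) *
        ((∑ x₂, if R x₁ x₂ then g t x₁ x₂ / f t x₁ else 0) -
          ∑ x₂, if R x₀ x₂ then g t x₀ x₂ / f t x₀ else 0)) t :=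
  velocity_field_evolution_general R f g h hfpos hf hg hBB t x₀ x₁ hx
end
end

section
/- Let (f_t) be a W₁,₊-geodesic on an oriented graph G with g_t > 0. For a geodesic γ of length n ≥ 2, define C_γ(t) = [g_t(γ₀γ₁)···g_t(γ_{n−1}γ_n)] / [f_t(γ₁)···f_t(γ_{n−1})] (with C_γ(t) = g_t(γ₀γ₁) for n = 1 and C_γ(t) = f_t(γ₀) for n = 0). Then ∂/∂t C_γ(t) = Σ_{x₀∈E(γ₀)} C_{x₀∪γ}(t) − Σ_{x₂∈F(γ_n)} C_{γ∪x₂}(t), where x₀∪γ and γ∪x₂ denote the geodesics obtained by prepending x₀ or appending x₂. -/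
/-!
Induction on the length `n`. Appending an edge multiplies `C_γ` by `g(γₙγₙ₊₁) / f(γₙ)`, both for
`γ` itself and for every prepended path, so the inflow term of the derivative is carried along.
The balance relation `f(x₁) h(x₀x₁x₂) = g(x₀x₁) g(x₁x₂)` turns the `h`-sums in `∂g` into
`g(xy) (in(x) / f(x) - out(y) / f(y))`; together with `∂f = in - out` the product rule then
cancels everything except the outflow at the new endpoint.
-/

open scoped BigOperators Classical

noncomputable section

variable {V : Type*}

/-- The quantity C_γ associated to a geodesic γ of length n. -/
def Cgeo (f : V → ℝ) (g : V → V → ℝ) (γ : ℕ → V) (n : ℕ) : ℝ :=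
  if n = 0 then f (γ 0)
  else (∏ i ∈ Finset.range n, g (γ i) (γ (i + 1))) / ∏ j ∈ Finset.Ico 1 n, f (γ j)

/-- Prepend a vertex to a path. -/
def prepend (x : V) (γ : ℕ → V) : ℕ → V := fun i => if i = 0 then x else γ (i - 1)

/-- Append a vertex to a path of length n. -/
def appendAt (γ : ℕ → V) (n : ℕ) (y : V) : ℕ → V := fun i => if i = n + 1 then y else γ i

lemma sum_ite_mul_div {ι K : Type*} [Fintype ι] [DivisionSemiring K] (P : ι → Prop)
    (a : ι → K) (c d : K) :
    (∑ x, if P x then c * a x / d else 0) = c * (∑ x, if P x then a x else 0) / d := by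
  rw [Finset.mul_sum, Finset.sum_div]
  exact Finset.sum_congr rfl fun x _ => by split_ifs <;> simp

section Flow

variable [Fintype V] {R : V → V → Prop}

def outflow (R : V → V → Prop) (g : V → V → ℝ) (x : V) : ℝ :=
  ∑ y, if R x y then g x y else 0

def inflow (R : V → V → Prop) (g : V → V → ℝ) (x : V) : ℝ :=
  ∑ z, if R z x then g z x else 0

section Balance

variable {f : V → ℝ} {g : V → V → ℝ} {h : V → V → V → ℝ}

lemma sum_out_eq_of_balance
    (hbal : ∀ x₀ x₁ x₂, R x₀ x₁ → R x₁ x₂ → f x₁ * h x₀ x₁ x₂ = g x₀ x₁ * g x₁ x₂)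
    {x y : V} (hxy : R x y) (hfy : f y ≠ 0) :
    (∑ w, if R y w then h x y w else 0) = g x y * outflow R g y / f y := by
  rw [outflow, ← sum_ite_mul_div]
  refine Finset.sum_congr rfl fun w _ => ?_
  split_ifs with hyw
  · rw [eq_div_iff hfy]
    linear_combination hbal x y w hxy hyw
  · rfl

lemma sum_in_eq_of_balance
    (hbal : ∀ x₀ x₁ x₂, R x₀ x₁ → R x₁ x₂ → f x₁ * h x₀ x₁ x₂ = g x₀ x₁ * g x₁ x₂)
    {x y : V} (hxy : R x y) (hfx : f x ≠ 0) :
    (∑ z, if R z x then h z x y else 0) = g x y * inflow R g x / f x := by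
  rw [inflow, ← sum_ite_mul_div]
  refine Finset.sum_congr rfl fun z _ => ?_
  split_ifs with hzx
  · rw [eq_div_iff hfx]
    linear_combination hbal z x y hzx hxy
  · rfl

end Balance

lemma hasDerivAt_weight_of_balance {f : ℝ → V → ℝ} {g : ℝ → V → V → ℝ}
    {h : ℝ → V → V → V → ℝ} {t : ℝ} {x y : V} (hxy : R x y) (hfx : f t x ≠ 0) (hfy : f t y ≠ 0)
    (hg : HasDerivAt (fun s => g s x y)
      (-((∑ w, if R y w then h t x y w else 0) - ∑ z, if R z x then h t z x y else 0)) t)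
    (hbal : ∀ x₀ x₁ x₂, R x₀ x₁ → R x₁ x₂ →
      f t x₁ * h t x₀ x₁ x₂ = g t x₀ x₁ * g t x₁ x₂) :
    HasDerivAt (fun s => g s x y)
      (-(g t x y * outflow R (g t) y / f t y - g t x y * inflow R (g t) x / f t x)) t := by
  rwa [sum_out_eq_of_balance hbal hxy hfy, sum_in_eq_of_balance hbal hxy hfx] at hg

end Flow

section Cgeo

variable (f : V → ℝ) (g : V → V → ℝ) {γ : ℕ → V}

lemma Cgeo_zero : Cgeo f g γ 0 = f (γ 0) := if_pos rfl

lemma Cgeo_one : Cgeo f g γ 1 = g (γ 0) (γ 1) := by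
  simp [Cgeo]

lemma Cgeo_succ {n : ℕ} (hf0 : f (γ n) ≠ 0) :
    Cgeo f g γ (n + 1) = Cgeo f g γ n * g (γ n) (γ (n + 1)) / f (γ n) := by
  rcases n with _ | m
  · rw [Cgeo_one, Cgeo_zero]
    field_simp
  · simp only [Cgeo, Nat.succ_ne_zero, if_false]
    rw [Finset.prod_range_succ, Finset.prod_Ico_succ_top (by omega : 1 ≤ m + 1),
      div_mul_eq_mul_div, div_div]

lemma Cgeo_congr {γ' : ℕ → V} {n : ℕ} (hγ : ∀ i ≤ n, γ i = γ' i) :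
    Cgeo f g γ n = Cgeo f g γ' n := by
  unfold Cgeo
  split
  · rw [hγ 0 n.zero_le]
  · congr 1
    · exact Finset.prod_congr rfl fun i hi => by
        rw [hγ i (Finset.mem_range.mp hi).le, hγ (i + 1) (Finset.mem_range.mp hi)]
    · exact Finset.prod_congr rfl fun j hj => by rw [hγ j (Finset.mem_Ico.mp hj).2.le]

lemma Cgeo_prepend_succ_succ (x : V) {n : ℕ} (hf0 : f (γ n) ≠ 0) :
    Cgeo f g (prepend x γ) (n + 1 + 1) =
      Cgeo f g (prepend x γ) (n + 1) * (g (γ n) (γ (n + 1)) / f (γ n)) := by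
  rw [Cgeo_succ f g (γ := prepend x γ) (n := n + 1) (by simpa [prepend] using hf0), mul_div_assoc]
  simp [prepend]

lemma Cgeo_appendAt (y : V) {n : ℕ} (hf0 : f (γ n) ≠ 0) :
    Cgeo f g (appendAt γ n y) (n + 1) = Cgeo f g γ n * g (γ n) y / f (γ n) := by
  have hn : appendAt γ n y n = γ n := by simp [appendAt]
  have hpre : Cgeo f g (appendAt γ n y) n = Cgeo f g γ n :=
    Cgeo_congr f g fun i hi => by simp [appendAt, Nat.ne_of_lt (Nat.lt_succ_of_le hi)]
  rw [Cgeo_succ f g (by rwa [hn]), hn, hpre]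
  simp [appendAt]

variable [Fintype V] (R : V → V → Prop)

lemma sum_Cgeo_prepend_succ_succ {n : ℕ} (hf0 : f (γ n) ≠ 0) :
    (∑ x, if R x (γ 0) then Cgeo f g (prepend x γ) (n + 1 + 1) else 0) =
      (∑ x, if R x (γ 0) then Cgeo f g (prepend x γ) (n + 1) else 0) *
        (g (γ n) (γ (n + 1)) / f (γ n)) := by
  rw [Finset.sum_mul]
  exact Finset.sum_congr rfl fun x _ => by
    split_ifs
    · exact Cgeo_prepend_succ_succ f g x hf0
    · rw [zero_mul]

lemma sum_Cgeo_appendAt {n : ℕ} (hf0 : f (γ n) ≠ 0) :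
    (∑ y, if R (γ n) y then Cgeo f g (appendAt γ n y) (n + 1) else 0) =
      Cgeo f g γ n * outflow R g (γ n) / f (γ n) := by
  rw [outflow, ← sum_ite_mul_div]
  exact Finset.sum_congr rfl fun y _ => by rw [Cgeo_appendAt f g y hf0]

lemma sum_Cgeo_prepend_one :
    (∑ x, if R x (γ 0) then Cgeo f g (prepend x γ) 1 else 0) = inflow R g (γ 0) := by
  simp [inflow, Cgeo_one, prepend]

end Cgeo

theorem Cgeo_deriv_general
    [Fintype V] (R : V → V → Prop)
    (f : ℝ → V → ℝ) (g : ℝ → V → V → ℝ) (h : ℝ → V → V → V → ℝ)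
    (hfpos : ∀ t x, 0 < f t x)
    (hf : ∀ t x, HasDerivAt (fun s => f s x)
      (-((∑ y, if R x y then g t x y else 0) - ∑ z, if R z x then g t z x else 0)) t)
    (hg : ∀ t x y, R x y → HasDerivAt (fun s => g s x y)
      (-((∑ w, if R y w then h t x y w else 0) - ∑ z, if R z x then h t z x y else 0)) t)
    (hBB : ∀ t x₀ x₁ x₂, R x₀ x₁ → R x₁ x₂ →
      f t x₁ * h t x₀ x₁ x₂ = g t x₀ x₁ * g t x₁ x₂)
    (γ : ℕ → V) (n : ℕ) (hpath : ∀ i < n, R (γ i) (γ (i + 1)))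
    (t : ℝ) :
    HasDerivAt (fun s => Cgeo (f s) (g s) γ n)
      ((∑ x₀, if R x₀ (γ 0) then Cgeo (f t) (g t) (prepend x₀ γ) (n + 1) else 0) -
        ∑ x₂, if R (γ n) x₂ then Cgeo (f t) (g t) (appendAt γ n x₂) (n + 1) else 0) t := by
  have hf0 : ∀ s x, f s x ≠ 0 := fun s x => (hfpos s x).ne'
  induction n with
  | zero =>
    rw [sum_Cgeo_prepend_one, sum_Cgeo_appendAt _ _ _ (hf0 t _), Cgeo_zero,
      mul_div_cancel_left₀ _ (hf0 t _), ← neg_sub]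
    simpa only [Cgeo_zero, outflow, inflow] using hf t (γ 0)
  | succ n ih =>
    have hR : R (γ n) (γ (n + 1)) := hpath n n.lt_succ_self
    have hfn : f t (γ n) ≠ 0 := hf0 t _
    have hfn' : f t (γ (n + 1)) ≠ 0 := hf0 t _
    have hC := ih fun i hi => hpath i (by omega)
    rw [sum_Cgeo_appendAt _ _ _ hfn] at hC
    have hf' : HasDerivAt (fun s => f s (γ n))
        (-(outflow R (g t) (γ n) - inflow R (g t) (γ n))) t := hf t _
    have hg' := hasDerivAt_weight_of_balance hR hfn hfn' (hg t _ _ hR) (hBB t)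
    have hsplit : (fun s => Cgeo (f s) (g s) γ (n + 1)) =
        ((fun s => Cgeo (f s) (g s) γ n) * fun s => g s (γ n) (γ (n + 1))) / fun s => f s (γ n) :=
      funext fun s => Cgeo_succ _ _ (hf0 s _)
    rw [hsplit]
    refine ((hC.mul hg').div hf' hfn).congr_deriv ?_
    rw [sum_Cgeo_prepend_succ_succ _ _ _ hfn, sum_Cgeo_appendAt _ _ _ hfn', Cgeo_succ _ _ hfn]
    simp only [Pi.mul_apply]
    field_simp
    ring

theorem Cgeo_deriv
    [Fintype V] (R : V → V → Prop)
    (f : ℝ → V → ℝ) (g : ℝ → V → V → ℝ) (h : ℝ → V → V → V → ℝ)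
    (hfpos : ∀ t x, 0 < f t x)
    (hgpos : ∀ t x y, R x y → 0 < g t x y)
    (hf : ∀ t x, HasDerivAt (fun s => f s x)
      (-((∑ y, if R x y then g t x y else 0) - ∑ z, if R z x then g t z x else 0)) t)
    (hg : ∀ t x y, R x y → HasDerivAt (fun s => g s x y)
      (-((∑ w, if R y w then h t x y w else 0) - ∑ z, if R z x then h t z x y else 0)) t)
    (hBB : ∀ t x₀ x₁ x₂, R x₀ x₁ → R x₁ x₂ →
      f t x₁ * h t x₀ x₁ x₂ = g t x₀ x₁ * g t x₁ x₂)
    (γ : ℕ → V) (n : ℕ) (hpath : ∀ i < n, R (γ i) (γ (i + 1)))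
    (t : ℝ) :
    HasDerivAt (fun s => Cgeo (f s) (g s) γ n)
      ((∑ x₀, if R x₀ (γ 0) then Cgeo (f t) (g t) (prepend x₀ γ) (n + 1) else 0) -
        ∑ x₂, if R (γ n) x₂ then Cgeo (f t) (g t) (appendAt γ n x₂) (n + 1) else 0) t :=
  Cgeo_deriv_general R f g h hfpos hf hg hBB γ n hpath t
end
end

section
/- Let m be defined on ordered tuples of vertices of an oriented acyclic graph G by m(z₁,…,z_p) = Σ_{γ ∈ E(z₁,…,z_p)} C_γ, where E(z₁,…,z_p) is the set of extremal geodesics passing through z₁ ≤ … ≤ z_p in order, and C_γ > 0 is a constant assigned to each extremal geodesic multiplicatively along edges (C_γ = Π m(γ_i,γ_{i+1})/Π m(γ_j)). Then for any chain x₀ ≤ x₁ ≤ … ≤ x_m of vertices, m(x₀,…,x_m) = [m(x₀,x₁)···m(x_{m−1},x_m)] / [m(x₁)···m(x_{m−1})]. -/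
open scoped BigOperators Classical

noncomputable section

variable {V : Type*} [Fintype V] [Inhabited V]

/-- The i-th vertex of a path represented as a list. -/
def vertAt (γ : List V) (i : ℕ) : V := γ.getD i default

/-- γ is an extremal geodesic: a nonempty oriented path starting at a source
and ending at a sink. -/
def IsExtremalPath (R : V → V → Prop) (γ : List V) : Prop :=
  γ ≠ [] ∧ γ.Chain' R ∧
    (∀ x z, γ.head? = some x → ¬ R z x) ∧
    (∀ x z, γ.getLast? = some x → ¬ R x z)

/-- γ passes through the vertices z 0 ≤ z 1 ≤ … ≤ z (p-1) in order. -/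
def Passes (γ : List V) (p : ℕ) (z : ℕ → V) : Prop :=
  ∃ k : ℕ → ℕ, (∀ i j, i ≤ j → j < p → k i ≤ k j) ∧
    ∀ i < p, k i < γ.length ∧ vertAt γ (k i) = z i

/-- m(z 0, …, z (p-1)): the sum of C_γ over extremal geodesics passing through
the given ordered tuple. -/
def mTuple (EG : Finset (List V)) (C : List V → ℝ) (p : ℕ) (z : ℕ → V) : ℝ :=
  ∑ γ ∈ EG, if Passes γ p z then C γ else 0

set_option linter.unusedSectionVars false

/-!
By induction on the length of the chain, the claim reduces to
`m(z₀,…,z_{p+1}) · m(z_p) = m(z₀,…,z_p) · m(z_p,z_{p+1})`. Both sides are sums of `C γ · C δ` over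
pairs of extremal geodesics, and they are matched by cutting `γ` and `δ` at an occurrence of `z_p`
and exchanging their tails. The weights agree because
`C γ = (∏ edges m) · m(first vertex) · m(last vertex) / (∏ vertices m)`, and the exchange preserves
the edges, the vertices, and the first and last vertices of the pair, counted with multiplicity.
-/

section Vertices

variable {γ γ' : List V} {i t : ℕ}

lemma vertAt_eq_getElem (h : i < γ.length) : vertAt γ i = γ[i] :=
  List.getD_eq_getElem _ _ h

lemma vertAt_take (h : i < t) : vertAt (γ.take t) i = vertAt γ i := by
  simp only [vertAt, List.getD_eq_getElem?_getD, List.getElem?_take, if_pos h]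

lemma vertAt_drop (γ : List V) (t i : ℕ) : vertAt (γ.drop t) i = vertAt γ (t + i) := by
  simp only [vertAt, List.getD_eq_getElem?_getD, List.getElem?_drop]

lemma ext_vertAt (hlen : γ.length = γ'.length) (h : ∀ i < γ.length, vertAt γ i = vertAt γ' i) :
    γ = γ' :=
  List.ext_getElem hlen fun i h₁ h₂ => by
    rw [← vertAt_eq_getElem h₁, ← vertAt_eq_getElem h₂, h i h₁]

lemma head?_eq_some_vertAt (h : γ ≠ []) : γ.head? = some (vertAt γ 0) := by
  rw [List.head?_eq_getElem?, List.getElem?_eq_getElem (List.length_pos_iff.2 h),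
    vertAt_eq_getElem]

lemma getLast?_eq_some_vertAt (h : γ ≠ []) :
    γ.getLast? = some (vertAt γ (γ.length - 1)) := by
  have := List.length_pos_iff.2 h
  rw [List.getLast?_eq_getElem?, List.getElem?_eq_getElem (by omega), vertAt_eq_getElem]

lemma isChain_iff_vertAt {R : V → V → Prop} :
    γ.IsChain R ↔ ∀ i, i + 1 < γ.length → R (vertAt γ i) (vertAt γ (i + 1)) := by
  rw [List.isChain_iff_getElem]
  refine forall_congr' fun i => ⟨fun h hi => ?_, fun h hi => ?_⟩ <;>
    simpa only [vertAt_eq_getElem hi, vertAt_eq_getElem (Nat.lt_of_succ_lt hi)] using h hi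

lemma prod_map_eq_prod_range_vertAt {M : Type*} [CommMonoid M] (f : V → M) (γ : List V) :
    (γ.map f).prod = ∏ i ∈ Finset.range γ.length, f (vertAt γ i) := by
  induction γ with
  | nil => simp
  | cons a γ ih =>
    simp only [List.map_cons, List.prod_cons, List.length_cons, Finset.prod_range_succ', ih]
    simp [vertAt, mul_comm]

end Vertices

lemma isExtremalPath_iff {R : V → V → Prop} {γ : List V} : IsExtremalPath R γ ↔ γ ≠ [] ∧
    (∀ i, i + 1 < γ.length → R (vertAt γ i) (vertAt γ (i + 1))) ∧
    (∀ u, ¬ R u (vertAt γ 0)) ∧ ∀ u, ¬ R (vertAt γ (γ.length - 1)) u := by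
  refine ⟨fun ⟨hne, hchain, hfirst, hlast⟩ => ⟨hne, isChain_iff_vertAt.1 hchain,
      fun u => hfirst _ u (head?_eq_some_vertAt hne),
      fun u => hlast _ u (getLast?_eq_some_vertAt hne)⟩,
    fun ⟨hne, hchain, hfirst, hlast⟩ => ⟨hne, isChain_iff_vertAt.2 hchain, ?_, ?_⟩⟩
  · intro a u ha
    rw [head?_eq_some_vertAt hne, Option.some_inj] at ha
    exact ha ▸ hfirst u
  · intro a u ha
    rw [getLast?_eq_some_vertAt hne, Option.some_inj] at ha
    exact ha ▸ hlast u

namespace IsExtremalPath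

variable {R : V → V → Prop} {γ : List V} {k : ℕ}

lemma exists_rel_to_iff (h : IsExtremalPath R γ) (hk : k < γ.length) :
    (∃ u, R u (vertAt γ k)) ↔ 0 < k := by
  obtain ⟨-, hchain, hfirst, -⟩ := isExtremalPath_iff.1 h
  refine ⟨fun ⟨u, hu⟩ => Nat.pos_of_ne_zero fun h0 => hfirst u (h0 ▸ hu), fun hk0 => ?_⟩
  exact ⟨_, Nat.sub_add_cancel hk0 ▸ hchain (k - 1) (by omega)⟩

lemma exists_rel_from_iff (h : IsExtremalPath R γ) (hk : k < γ.length) :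
    (∃ u, R (vertAt γ k) u) ↔ k + 1 < γ.length := by
  obtain ⟨-, hchain, -, hlast⟩ := isExtremalPath_iff.1 h
  refine ⟨fun ⟨u, hu⟩ => ?_, fun hk1 => ⟨_, hchain k hk1⟩⟩
  by_contra hk1
  exact hlast u (show k = γ.length - 1 by omega ▸ hu)

lemma two_le_length_iff (h : IsExtremalPath R γ) (hk : k < γ.length) :
    2 ≤ γ.length ↔ (∃ u, R u (vertAt γ k)) ∨ ∃ u, R (vertAt γ k) u := by
  rw [h.exists_rel_to_iff hk, h.exists_rel_from_iff hk]
  omega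

end IsExtremalPath

def splice (x : List V) (k : ℕ) (y : List V) (l : ℕ) : List V := x.take k ++ y.drop l

section Splice

variable {x y : List V} {k l : ℕ}

lemma length_splice (hk : k ≤ x.length) : (splice x k y l).length = k + (y.length - l) := by
  simp [splice, hk]

lemma vertAt_splice_of_lt (hk : k ≤ x.length) {i : ℕ} (hi : i < k) :
    vertAt (splice x k y l) i = vertAt x i := by
  rw [splice, vertAt, List.getD_append _ _ _ _ (by simpa [hk] using hi), ← vertAt, vertAt_take hi]

lemma vertAt_splice_add (hk : k ≤ x.length) (t : ℕ) :
    vertAt (splice x k y l) (k + t) = vertAt y (l + t) := by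
  rw [splice, vertAt, List.getD_append_right _ _ _ _ (by simp [hk]), ← vertAt, vertAt_drop]
  simp [hk]

lemma vertAt_splice_of_le (hk : k < x.length) (hxy : vertAt x k = vertAt y l) {i : ℕ}
    (hi : i ≤ k) : vertAt (splice x k y l) i = vertAt x i := by
  rcases hi.lt_or_eq with hi | rfl
  · exact vertAt_splice_of_lt hk.le hi
  · simpa [hxy] using vertAt_splice_add (y := y) (l := l) hk.le 0

lemma vertAt_splice_length_sub_one (hk : k ≤ x.length) (hl : l < y.length) :
    vertAt (splice x k y l) ((splice x k y l).length - 1) = vertAt y (y.length - 1) := by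
  rw [length_splice hk, show k + (y.length - l) - 1 = k + (y.length - 1 - l) by omega,
    vertAt_splice_add hk, show l + (y.length - 1 - l) = y.length - 1 by omega]

lemma take_splice (hk : k < x.length) (hl : l < y.length) (hxy : vertAt x k = vertAt y l) :
    (splice x k y l).take (k + 1) = x.take (k + 1) := by
  refine ext_vertAt (by simp only [List.length_take, length_splice hk.le]; omega) fun i hi => ?_
  have hik : i < k + 1 := by rw [List.length_take] at hi; omega
  rw [vertAt_take hik, vertAt_take hik, vertAt_splice_of_le hk hxy (by omega)]

lemma drop_splice (hk : k ≤ x.length) : (splice x k y l).drop k = y.drop l :=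
  List.drop_left' (by simp [hk])

lemma splice_splice (hk : k ≤ x.length) (hl : l ≤ y.length) :
    splice (splice x k y l) k (splice y l x k) l = x := by
  simp only [splice]
  rw [List.take_left' (by simp [hk]), List.drop_left' (by simp [hl]), List.take_append_drop]

lemma prod_map_splice_mul {M : Type*} [CommMonoid M] (f : V → M) :
    ((splice x k y l).map f).prod * ((splice y l x k).map f).prod =
      (x.map f).prod * (y.map f).prod := by
  conv_rhs => rw [← List.take_append_drop k x, ← List.take_append_drop l y]
  simp only [splice, List.map_append, List.prod_append]
  ac_rfl

lemma isExtremalPath_splice {R : V → V → Prop} (hx : IsExtremalPath R x)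
    (hy : IsExtremalPath R y) (hk : k < x.length) (hl : l < y.length)
    (hxy : vertAt x k = vertAt y l) : IsExtremalPath R (splice x k y l) := by
  obtain ⟨-, hxchain, hxfirst, -⟩ := isExtremalPath_iff.1 hx
  obtain ⟨-, hychain, -, hylast⟩ := isExtremalPath_iff.1 hy
  have hlen := length_splice (y := y) (l := l) hk.le
  refine isExtremalPath_iff.2 ⟨List.ne_nil_of_length_pos (by omega), fun i hi => ?_, ?_, ?_⟩
  · rcases lt_or_ge i k with hik | hik
    · rw [vertAt_splice_of_le hk hxy hik.le, vertAt_splice_of_le hk hxy hik]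
      exact hxchain i (by omega)
    · obtain ⟨t, rfl⟩ := Nat.exists_eq_add_of_le hik
      rw [vertAt_splice_add hk.le, add_assoc, vertAt_splice_add hk.le, ← add_assoc]
      exact hychain _ (by omega)
  · rw [vertAt_splice_of_le hk hxy (Nat.zero_le k)]
    exact hxfirst
  · rw [vertAt_splice_length_sub_one hk.le hl]
    exact hylast

end Splice

def edgeProd {M : Type*} [CommMonoid M] (g : V → V → M) (γ : List V) : M :=
  ∏ i ∈ Finset.range (γ.length - 1), g (vertAt γ i) (vertAt γ (i + 1))

section EdgeProd

variable {M : Type*} [CommMonoid M] (g : V → V → M)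

lemma edgeProd_eq_mul {γ : List V} {t : ℕ} (ht : t < γ.length) :
    edgeProd g γ = edgeProd g (γ.take (t + 1)) * edgeProd g (γ.drop t) := by
  have htake : (γ.take (t + 1)).length - 1 = t := by rw [List.length_take]; omega
  have hdrop : (γ.drop t).length - 1 = γ.length - 1 - t := by rw [List.length_drop]; omega
  rw [edgeProd, edgeProd, edgeProd, htake, hdrop,
    show γ.length - 1 = t + (γ.length - 1 - t) by omega, Finset.prod_range_add,
    Nat.add_sub_cancel_left]
  congr 1
  · refine Finset.prod_congr rfl fun i hi => ?_
    rw [Finset.mem_range] at hi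
    rw [vertAt_take (by omega), vertAt_take (by omega)]
  · refine Finset.prod_congr rfl fun i _ => ?_
    rw [vertAt_drop, vertAt_drop, add_assoc]

lemma edgeProd_splice_mul {x y : List V} {k l : ℕ} (hk : k < x.length) (hl : l < y.length)
    (hxy : vertAt x k = vertAt y l) :
    edgeProd g (splice x k y l) * edgeProd g (splice y l x k) = edgeProd g x * edgeProd g y := by
  have hlen₁ := length_splice (y := y) (l := l) hk.le
  have hlen₂ := length_splice (y := x) (l := k) hl.le
  rw [edgeProd_eq_mul g (γ := splice x k y l) (t := k) (by omega),
    edgeProd_eq_mul g (γ := splice y l x k) (t := l) (by omega), edgeProd_eq_mul g hk,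
    edgeProd_eq_mul g hl, take_splice hk hl hxy, take_splice hl hk hxy.symm,
    drop_splice hk.le, drop_splice hl.le]
  ac_rfl

end EdgeProd

lemma prod_map_eq_mul_prod_Ico_mul {M : Type*} [CommMonoid M] (f : V → M) {γ : List V}
    (h : 2 ≤ γ.length) :
    (γ.map f).prod = f (vertAt γ 0) * (∏ j ∈ Finset.Ico 1 (γ.length - 1), f (vertAt γ j)) *
      f (vertAt γ (γ.length - 1)) := by
  rw [prod_map_eq_prod_range_vertAt, show γ.length = γ.length - 1 + 1 by omega,
    Finset.prod_range_succ, Finset.prod_range_eq_mul_Ico _ (by omega), Nat.add_sub_cancel]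

lemma passes_congr {γ : List V} {q : ℕ} {z z' : ℕ → V} (h : ∀ i < q, z i = z' i) :
    Passes γ q z ↔ Passes γ q z' := by
  unfold Passes
  refine exists_congr fun k => and_congr_right fun _ => forall₂_congr fun i hi => ?_
  rw [h i hi]

lemma Passes.mono {γ : List V} {m n : ℕ} {z : ℕ → V} (h : Passes γ m z) (hnm : n ≤ m) :
    Passes γ n z :=
  let ⟨pos, hmono, hpos⟩ := h
  ⟨pos, fun i j hij hj => hmono i j hij (by omega), fun i hi => hpos i (by omega)⟩

def PassesEndingAt (γ : List V) (q : ℕ) (z : ℕ → V) (k : ℕ) : Prop :=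
  k < γ.length ∧ vertAt γ k = z q ∧ Passes (γ.take (k + 1)) q z

section PassesEndingAt

variable {γ γ' : List V} {q : ℕ} {z : ℕ → V} {j k : ℕ}

lemma passes_succ_iff : Passes γ (q + 1) z ↔ ∃ k, PassesEndingAt γ q z k := by
  constructor
  · rintro ⟨pos, hmono, hpos⟩
    refine ⟨pos q, (hpos q q.lt_succ_self).1, (hpos q q.lt_succ_self).2,
      pos, fun i j hij hj => hmono i j hij (by omega), fun i hi => ?_⟩
    obtain ⟨hi_lt, hi_z⟩ := hpos i (by omega)
    have hiq : pos i ≤ pos q := hmono i q hi.le q.lt_succ_self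
    exact ⟨by rw [List.length_take]; omega, by rw [vertAt_take (by omega), hi_z]⟩
  · rintro ⟨k, hk, hkz, pos, hmono, hpos⟩
    have hle : ∀ i < q, pos i ≤ k := fun i hi => by
      have := (hpos i hi).1
      rw [List.length_take] at this
      omega
    refine ⟨fun i => if i < q then pos i else k, fun i j hij hj => ?_, fun i hi => ?_⟩
    · by_cases hi : i < q <;> by_cases hj' : j < q <;> simp only [hi, hj', if_true, if_false]
      · exact hmono i j hij hj'
      · exact hle i hi
      · omega
      · exact le_rfl
    · by_cases hiq : i < q
      · simp only [hiq, if_true]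
        have := hle i hiq
        exact ⟨by omega, by rw [← vertAt_take (t := k + 1) (by omega), (hpos i hiq).2]⟩
      · simp only [hiq, if_false]
        obtain rfl : i = q := by omega
        exact ⟨hk, hkz⟩

lemma passesEndingAt_iff_take (hjk : j ≤ k) :
    PassesEndingAt γ q z j ↔ PassesEndingAt (γ.take (k + 1)) q z j := by
  simp only [PassesEndingAt, List.length_take, List.take_take, vertAt_take (Nat.lt_succ_of_le hjk),
    Nat.min_eq_left (Nat.succ_le_succ hjk)]
  constructor <;> rintro ⟨h₁, h₂, h₃⟩ <;> exact ⟨by omega, h₂, h₃⟩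

lemma passesEndingAt_congr (hjk : j ≤ k) (h : γ.take (k + 1) = γ'.take (k + 1)) :
    PassesEndingAt γ q z j ↔ PassesEndingAt γ' q z j := by
  rw [passesEndingAt_iff_take hjk, h, ← passesEndingAt_iff_take hjk]

lemma passes_add_two_iff : Passes γ (q + 2) z ↔ ∃ k, PassesEndingAt γ q z k ∧
    ∃ j, k ≤ j ∧ j < γ.length ∧ vertAt γ j = z (q + 1) := by
  rw [passes_succ_iff]
  constructor
  · rintro ⟨j, hj, hjz, hpass⟩
    obtain ⟨k, hk⟩ := passes_succ_iff.1 hpass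
    have hkj : k ≤ j := by have := hk.1; rw [List.length_take] at this; omega
    exact ⟨k, (passesEndingAt_iff_take hkj).2 hk, j, hkj, hj, hjz⟩
  · rintro ⟨k, hk, j, hkj, hj, hjz⟩
    exact ⟨j, hj, hjz, passes_succ_iff.2 ⟨k, (passesEndingAt_iff_take hkj).1 hk⟩⟩

end PassesEndingAt

def firstPassIdx (γ : List V) (q : ℕ) (z : ℕ → V) : ℕ := sInf {k | PassesEndingAt γ q z k}

section FirstPassIdx

variable {γ γ' : List V} {q : ℕ} {z : ℕ → V} {k : ℕ}

lemma passesEndingAt_firstPassIdx (h : ∃ k, PassesEndingAt γ q z k) :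
    PassesEndingAt γ q z (firstPassIdx γ q z) :=
  Nat.sInf_mem h

lemma firstPassIdx_le (h : PassesEndingAt γ q z k) : firstPassIdx γ q z ≤ k :=
  Nat.sInf_le h

lemma firstPassIdx_eq_of_take_eq (h : PassesEndingAt γ q z (firstPassIdx γ q z))
    (htake : γ'.take (firstPassIdx γ q z + 1) = γ.take (firstPassIdx γ q z + 1)) :
    firstPassIdx γ' q z = firstPassIdx γ q z := by
  have h' : PassesEndingAt γ' q z (firstPassIdx γ q z) :=
    (passesEndingAt_congr le_rfl htake.symm).1 h
  refine (firstPassIdx_le h').antisymm (firstPassIdx_le ?_)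
  exact (passesEndingAt_congr (firstPassIdx_le h') htake).1 (passesEndingAt_firstPassIdx ⟨_, h'⟩)

end FirstPassIdx

section PassesSplice

variable {x y : List V} {q : ℕ} {z : ℕ → V} {k l : ℕ}

lemma passesEndingAt_splice (h : PassesEndingAt x q z k) (hl : l < y.length)
    (hxy : vertAt x k = vertAt y l) : PassesEndingAt (splice x k y l) q z k :=
  (passesEndingAt_congr le_rfl (take_splice h.1 hl hxy).symm).1 h

lemma firstPassIdx_splice (h : PassesEndingAt x q z (firstPassIdx x q z)) (hl : l < y.length)
    (hxy : vertAt x (firstPassIdx x q z) = vertAt y l) :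
    firstPassIdx (splice x (firstPassIdx x q z) y l) q z = firstPassIdx x q z :=
  firstPassIdx_eq_of_take_eq h (take_splice h.1 hl hxy)

lemma passes_splice_add_two (h : PassesEndingAt x q z k) (hl : l < y.length)
    (hxy : vertAt x k = vertAt y l) {j : ℕ} (hlj : l ≤ j) (hj : j < y.length)
    (hjz : vertAt y j = z (q + 1)) : Passes (splice x k y l) (q + 2) z := by
  refine passes_add_two_iff.2 ⟨k, passesEndingAt_splice h hl hxy, k + (j - l), by omega, ?_, ?_⟩
  · rw [length_splice h.1.le]; omega
  · rw [vertAt_splice_add h.1.le, Nat.add_sub_cancel' hlj, hjz]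

end PassesSplice

/-- Cut `γ` where it first reaches `z p` after passing `z 0, …, z (p - 1)`, cut `δ` at its first
visit of `z p`, and exchange the tails. Cutting at first passages makes this an involution. -/
def swapTails (p : ℕ) (z : ℕ → V) (π : List V × List V) : List V × List V :=
  let k := firstPassIdx π.1 p z
  let l := firstPassIdx π.2 0 fun s => z (p + s)
  (splice π.1 k π.2 l, splice π.2 l π.1 k)

section SwapTails

variable {p : ℕ} {z : ℕ → V} {γ δ : List V}

lemma swapTails_swapTails (hγ : ∃ k, PassesEndingAt γ p z k)
    (hδ : ∃ l, PassesEndingAt δ 0 (fun s => z (p + s)) l) :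
    swapTails p z (swapTails p z (γ, δ)) = (γ, δ) := by
  have hk := passesEndingAt_firstPassIdx hγ
  have hl := passesEndingAt_firstPassIdx hδ
  have hxy := hk.2.1.trans hl.2.1.symm
  simp only [swapTails, firstPassIdx_splice hk hl.1 hxy, firstPassIdx_splice hl hk.1 hxy.symm,
    splice_splice hk.1.le hl.1.le, splice_splice hl.1.le hk.1.le]

variable {R : V → V → Prop}

lemma swapTails_left_to_right (hγ : IsExtremalPath R γ) (hγp : Passes γ (p + 2) z)
    (hδ : IsExtremalPath R δ) (hδp : Passes δ 1 fun s => z (p + s)) :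
    (IsExtremalPath R (swapTails p z (γ, δ)).1 ∧ Passes (swapTails p z (γ, δ)).1 (p + 1) z) ∧
      IsExtremalPath R (swapTails p z (γ, δ)).2 ∧
        Passes (swapTails p z (γ, δ)).2 2 fun s => z (p + s) := by
  obtain ⟨k₀, hk₀, j, hkj, hj, hjz⟩ := passes_add_two_iff.1 hγp
  have hk := passesEndingAt_firstPassIdx ⟨k₀, hk₀⟩
  have hl := passesEndingAt_firstPassIdx (passes_succ_iff.1 hδp)
  have hxy := hk.2.1.trans hl.2.1.symm
  exact ⟨⟨isExtremalPath_splice hγ hδ hk.1 hl.1 hxy,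
      passes_succ_iff.2 ⟨_, passesEndingAt_splice hk hl.1 hxy⟩⟩,
    isExtremalPath_splice hδ hγ hl.1 hk.1 hxy.symm,
    passes_splice_add_two hl hk.1 hxy.symm ((firstPassIdx_le hk₀).trans hkj) hj hjz⟩

lemma swapTails_right_to_left (hγ : IsExtremalPath R γ) (hγp : Passes γ (p + 1) z)
    (hδ : IsExtremalPath R δ) (hδp : Passes δ 2 fun s => z (p + s)) :
    (IsExtremalPath R (swapTails p z (γ, δ)).1 ∧ Passes (swapTails p z (γ, δ)).1 (p + 2) z) ∧
      IsExtremalPath R (swapTails p z (γ, δ)).2 ∧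
        Passes (swapTails p z (γ, δ)).2 1 fun s => z (p + s) := by
  obtain ⟨l₀, hl₀, j, hlj, hj, hjz⟩ := passes_add_two_iff.1 hδp
  have hk := passesEndingAt_firstPassIdx (passes_succ_iff.1 hγp)
  have hl := passesEndingAt_firstPassIdx ⟨l₀, hl₀⟩
  have hxy := hk.2.1.trans hl.2.1.symm
  exact ⟨⟨isExtremalPath_splice hγ hδ hk.1 hl.1 hxy,
      passes_splice_add_two hk hl.1 hxy ((firstPassIdx_le hl₀).trans hlj) hj hjz⟩,
    isExtremalPath_splice hδ hγ hl.1 hk.1 hxy.symm,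
    passes_succ_iff.2 ⟨_, passesEndingAt_splice hl hk.1 hxy.symm⟩⟩

end SwapTails

/-- The paper's `m(a)`. -/
def mVertex (EG : Finset (List V)) (C : List V → ℝ) (a : V) : ℝ := mTuple EG C 1 fun _ => a

/-- The paper's `m(a, b)`, the pair being encoded as the sequence `a, b, b, …`. -/
def mEdge (EG : Finset (List V)) (C : List V → ℝ) (a b : V) : ℝ :=
  mTuple EG C 2 fun s => if s = 0 then a else b

section Weights

variable {EG : Finset (List V)} {C : List V → ℝ}

lemma mTuple_congr {q : ℕ} {z z' : ℕ → V} (h : ∀ i < q, z i = z' i) :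
    mTuple EG C q z = mTuple EG C q z' :=
  Finset.sum_congr rfl fun γ _ => by rw [passes_congr h]

lemma mTuple_pos (hCpos : ∀ γ ∈ EG, 0 < C γ) {γ : List V} (hγ : γ ∈ EG) {q : ℕ} {z : ℕ → V}
    (h : Passes γ q z) : 0 < mTuple EG C q z :=
  Finset.sum_pos' (fun δ hδ => by split_ifs <;> simp [(hCpos δ hδ).le])
    ⟨γ, hγ, by rw [if_pos h]; exact hCpos γ hγ⟩

lemma mVertex_pos (hCpos : ∀ γ ∈ EG, 0 < C γ) {γ : List V} (hγ : γ ∈ EG) {i : ℕ}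
    (hi : i < γ.length) : 0 < mVertex EG C (vertAt γ i) :=
  mTuple_pos hCpos hγ ⟨fun _ => i, fun _ _ _ _ => le_rfl, fun _ _ => ⟨hi, rfl⟩⟩

lemma mVertex_pos_of_mTuple_ne_zero (hCpos : ∀ γ ∈ EG, 0 < C γ) {q : ℕ} {z : ℕ → V}
    (h : mTuple EG C q z ≠ 0) {i : ℕ} (hi : i < q) : 0 < mVertex EG C (z i) := by
  obtain ⟨γ, hγ, hne⟩ := Finset.exists_ne_zero_of_sum_ne_zero h
  obtain ⟨pos, -, hpos⟩ : Passes γ q z := by by_contra hp; exact hne (if_neg hp)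
  rw [← (hpos i hi).2]
  exact mVertex_pos hCpos hγ (hpos i hi).1

lemma prod_mTuple_two_eq_edgeProd (γ : List V) :
    ∏ i ∈ Finset.range (γ.length - 1), mTuple EG C 2 (fun s => vertAt γ (i + s)) =
      edgeProd (mEdge EG C) γ :=
  Finset.prod_congr rfl fun i _ => mTuple_congr fun s hs => by
    interval_cases s <;> simp

end Weights

section Multiplicativity

variable {R : V → V → Prop} {EG : Finset (List V)} {C : List V → ℝ}
  (hCpos : ∀ γ ∈ EG, 0 < C γ)
  (hCmul : ∀ γ ∈ EG, 2 ≤ γ.length → C γ =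
    (∏ i ∈ Finset.range (γ.length - 1), mTuple EG C 2 (fun s => vertAt γ (i + s))) /
      ∏ j ∈ Finset.Ico 1 (γ.length - 1), mTuple EG C 1 (fun _ => vertAt γ j))
  (hEG : ∀ γ, γ ∈ EG ↔ IsExtremalPath R γ)
include hCpos hCmul

lemma C_eq_of_two_le_length {γ : List V} (hγ : γ ∈ EG) (h2 : 2 ≤ γ.length) :
    C γ = edgeProd (mEdge EG C) γ *
      (mVertex EG C (vertAt γ 0) * mVertex EG C (vertAt γ (γ.length - 1))) /
        (γ.map (mVertex EG C)).prod := by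
  have hends := mul_pos (mVertex_pos hCpos hγ (i := 0) (by omega))
    (mVertex_pos hCpos hγ (i := γ.length - 1) (by omega))
  rw [hCmul γ hγ h2, prod_mTuple_two_eq_edgeProd, prod_map_eq_mul_prod_Ico_mul _ h2,
    ← mul_div_mul_right _ _ hends.ne']
  simp only [mVertex]
  ring

include hEG

lemma C_splice_mul {x y : List V} {k l : ℕ} (hx : IsExtremalPath R x) (hy : IsExtremalPath R y)
    (hk : k < x.length) (hl : l < y.length) (hxy : vertAt x k = vertAt y l) :
    C (splice x k y l) * C (splice y l x k) = C x * C y := by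
  have hα := isExtremalPath_splice hx hy hk hl hxy
  have hβ := isExtremalPath_splice hy hx hl hk hxy.symm
  have hlenα := length_splice (y := y) (l := l) hk.le
  have hlenβ := length_splice (y := x) (l := k) hl.le
  by_cases hw : (∃ u, R u (vertAt x k)) ∨ ∃ u, R (vertAt x k) u
  · have h2 : ∀ {γ i}, IsExtremalPath R γ → i < γ.length → vertAt γ i = vertAt x k →
        2 ≤ γ.length := fun hγ hi hiw => (hγ.two_le_length_iff hi).2 (hiw ▸ hw)
    have h2α : 2 ≤ (splice x k y l).length :=
      h2 hα (i := k) (by omega) (vertAt_splice_of_le hk hxy le_rfl)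
    have h2β : 2 ≤ (splice y l x k).length :=
      h2 hβ (i := l) (by omega) ((vertAt_splice_of_le hl hxy.symm le_rfl).trans hxy.symm)
    have hC := fun {γ} (hγ : IsExtremalPath R γ) =>
      C_eq_of_two_le_length hCpos hCmul ((hEG γ).2 hγ)
    rw [hC hα h2α, hC hβ h2β, hC hx (h2 hx hk rfl), hC hy (h2 hy hl hxy.symm),
      div_mul_div_comm, div_mul_div_comm, prod_map_splice_mul,
      vertAt_splice_of_le hk hxy (Nat.zero_le k), vertAt_splice_of_le hl hxy.symm (Nat.zero_le l),
      vertAt_splice_length_sub_one hk.le hl, vertAt_splice_length_sub_one hl.le hk]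
    congr 1
    linear_combination (mVertex EG C (vertAt x 0) * mVertex EG C (vertAt y (y.length - 1)) *
      mVertex EG C (vertAt y 0) * mVertex EG C (vertAt x (x.length - 1))) *
        edgeProd_splice_mul (mEdge EG C) hk hl hxy
  · -- `vertAt x k` is isolated, so `x` and `y` both consist of this single vertex
    have hlen1 : ∀ {γ i}, IsExtremalPath R γ → i < γ.length → vertAt γ i = vertAt x k →
        γ.length = 1 := fun hγ hi hiw => by
      have := mt (hγ.two_le_length_iff hi).1 (hiw ▸ hw)
      omega
    obtain rfl : k = 0 := by have := hlen1 hx hk rfl; omega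
    obtain rfl : l = 0 := by have := hlen1 hy hl hxy.symm; omega
    simp [splice, mul_comm]

lemma C_swapTails_mul {p : ℕ} {z : ℕ → V} {γ δ : List V} (hγ : IsExtremalPath R γ)
    (hγp : Passes γ (p + 1) z) (hδ : IsExtremalPath R δ) (hδp : Passes δ 1 fun s => z (p + s)) :
    C (swapTails p z (γ, δ)).1 * C (swapTails p z (γ, δ)).2 = C γ * C δ := by
  have hk := passesEndingAt_firstPassIdx (passes_succ_iff.1 hγp)
  have hl := passesEndingAt_firstPassIdx (passes_succ_iff.1 hδp)
  exact C_splice_mul hCpos hCmul hEG hγ hδ hk.1 hl.1 (hk.2.1.trans hl.2.1.symm)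

lemma mTuple_add_two_mul (p : ℕ) (z : ℕ → V) :
    mTuple EG C (p + 2) z * mTuple EG C 1 (fun s => z (p + s)) =
      mTuple EG C (p + 1) z * mTuple EG C 2 (fun s => z (p + s)) := by
  simp only [mTuple, ← Finset.sum_filter, Finset.sum_mul_sum, ← Finset.sum_product']
  refine Finset.sum_nbij' (swapTails p z) (swapTails p z) ?_ ?_ ?_ ?_ ?_ <;>
    rintro ⟨γ, δ⟩ hmem <;>
    simp only [Finset.mem_product, Finset.mem_filter, hEG] at hmem ⊢ <;>
    obtain ⟨⟨hγ, hγp⟩, hδ, hδp⟩ := hmem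
  · exact swapTails_left_to_right hγ hγp hδ hδp
  · exact swapTails_right_to_left hγ hγp hδ hδp
  · exact swapTails_swapTails (passes_succ_iff.1 (hγp.mono (by omega))) (passes_succ_iff.1 hδp)
  · exact swapTails_swapTails (passes_succ_iff.1 hγp) (passes_succ_iff.1 (hδp.mono (by omega)))
  · exact (C_swapTails_mul hCpos hCmul hEG hγ (hγp.mono (by omega)) hδ hδp).symm

lemma mTuple_add_two (p : ℕ) (z : ℕ → V) :
    mTuple EG C (p + 2) z =
      mTuple EG C (p + 1) z * mTuple EG C 2 (fun s => z (p + s)) / mVertex EG C (z p) := by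
  by_cases h0 : mVertex EG C (z p) = 0
  · rw [h0, div_zero]
    by_contra hne
    exact (mVertex_pos_of_mTuple_ne_zero hCpos hne (by omega : p < p + 2)).ne' h0
  · rw [eq_div_iff h0, ← mTuple_add_two_mul hCpos hCmul hEG, mVertex]
    congr 1
    exact mTuple_congr fun i hi => by obtain rfl : i = 0 := (by omega); rfl

end Multiplicativity

theorem mTuple_multiplicative_general
    (R : V → V → Prop)
    (EG : Finset (List V)) (hEG : ∀ γ, γ ∈ EG ↔ IsExtremalPath R γ)
    (C : List V → ℝ) (hCpos : ∀ γ ∈ EG, 0 < C γ)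
    (hCmul : ∀ γ ∈ EG, 2 ≤ γ.length → C γ =
      (∏ i ∈ Finset.range (γ.length - 1), mTuple EG C 2 (fun s => vertAt γ (i + s))) /
        ∏ j ∈ Finset.Ico 1 (γ.length - 1), mTuple EG C 1 (fun _ => vertAt γ j))
    (mm : ℕ) (hmm : 1 ≤ mm) (z : ℕ → V) :
    mTuple EG C (mm + 1) z =
      (∏ i ∈ Finset.range mm, mTuple EG C 2 (fun s => z (i + s))) /
        ∏ j ∈ Finset.Ico 1 mm, mTuple EG C 1 (fun _ => z j) := by
  induction mm, hmm using Nat.le_induction with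
  | base => simp
  | succ n hn ih =>
    rw [mTuple_add_two hCpos hCmul hEG, ih, Finset.prod_range_succ, Finset.prod_Ico_succ_top hn,
      mVertex]
    ring

theorem mTuple_multiplicative
    (R : V → V → Prop)
    (EG : Finset (List V)) (hEG : ∀ γ, γ ∈ EG ↔ IsExtremalPath R γ)
    (C : List V → ℝ) (hCpos : ∀ γ ∈ EG, 0 < C γ)
    (hCmul : ∀ γ ∈ EG, 2 ≤ γ.length → C γ =
      (∏ i ∈ Finset.range (γ.length - 1), mTuple EG C 2 (fun s => vertAt γ (i + s))) /
        ∏ j ∈ Finset.Ico 1 (γ.length - 1), mTuple EG C 1 (fun _ => vertAt γ j))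
    (mm : ℕ) (hmm : 1 ≤ mm) (z : ℕ → V)
    (hchain : ∀ i < mm, Relation.ReflTransGen R (z i) (z (i + 1))) :
    mTuple EG C (mm + 1) z =
      (∏ i ∈ Finset.range mm, mTuple EG C 2 (fun s => z (i + s))) /
        ∏ j ∈ Finset.Ico 1 mm, mTuple EG C 1 (fun _ => z j) :=
  mTuple_multiplicative_general R EG hEG C hCpos hCmul mm hmm z
end
end

section
/- Let G be an oriented acyclic finite graph arising from the W₁-orientation w.r.t. finitely supported f₀, f₁, let m : E(G) → ℝ₊* satisfy ∇m(x) = 0 for x ∉ A ∪ B, extended multiplicatively to ordered tuples, and let a,b : G → ℝ₊ be nonnegative. Define f_t(z) = Σ_{x ≤ z ≤ y} [m(x,y)/d(x,y)!] a(x) b(y) Bin_{(x,y),t}(z), where Bin_{(x,y),t}(z) = [m(x,z,y)/m(x,y)] · [d(x,y)!/(d(x,z)! d(z,y)!)] · t^{d(x,z)}(1−t)^{d(z,y)}. Then setting g_t(x₀x₁) = m(x₀,x₁)P_t(x₀)Q_{1−t}(x₁) and h_t(x₀x₁x₂) = m(x₀,x₁,x₂)P_t(x₀)Q_{1−t}(x₂),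 with P_t(z) = (1/m(z))Σ_{x≤z} m(x,z)a(x)t^{d(x,z)}/d(x,z)! and Q_t(z) = (1/m(z))Σ_{y≥z} m(z,y)b(y)t^{d(z,y)}/d(z,y)!, the triple (f_t,g_t,h_t) satisfies: f_t(z) = m(z)P_t(z)Q_{1−t}(z), ∂f_t/∂t = −∇g_t, ∂g_t/∂t = −∇h_t, and the Benamou-Brenier equation f_t(x₁)h_t(x₀x₁x₂) = g_t(x₀x₁)g_t(x₁x₂). -/
/-!
Conditioning the binomial weight on its midpoint, the chain rule
`m(z) m(x,z,y) = m(x,z) m(z,y)` factorises `f_t(z) = m(z) P_t(z) Q_{1-t}(z)`.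
`P_t` solves the forward equation `∂ₜ P_t(z) = m(z)⁻¹ ∑_{y → z} m(y,z) P_t(y)`:
differentiating `t^{d(x,z)} / d(x,z)!` lowers the distance by one, and `m(x,z)` splits over the
last edges `y → z` of the paths from `x`, all of which have `d(x,y) = d(x,z) - 1`. `Q_t` is the
same flow for the reversed orientation. The two continuity equations are then the product rule,
and the Benamou–Brenier identity is the chain rule once more.
-/

open scoped BigOperators Classical

noncomputable section

open Finset Function Relation

theorem sum_ite_eq_mul_sum_ite {ι R : Type*} [Fintype ι] [NonUnitalNonAssocSemiring R]
    {p : ι → Prop} {u v : ι → R} (c : R) (h : ∀ i, p i → u i = c * v i) :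
    (∑ i, if p i then u i else 0) = c * ∑ i, if p i then v i else 0 := by
  rw [mul_sum]
  refine sum_congr rfl fun i _ => ?_
  split_ifs with hi
  · exact h i hi
  · rw [mul_zero]

theorem hasDerivAt_pow_succ_div_factorial (n : ℕ) (t : ℝ) :
    HasDerivAt (fun s : ℝ => s ^ (n + 1) / ((n + 1).factorial : ℝ))
      (t ^ n / (n.factorial : ℝ)) t := by
  refine ((hasDerivAt_pow (n + 1) t).div_const _).congr_deriv ?_
  rw [Nat.factorial_succ]
  push_cast
  field_simp

theorem hasDerivAt_const_mul_mul_comp_one_sub {p q : ℝ → ℝ} {p' q' t : ℝ} (c : ℝ)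
    (hp : HasDerivAt p p' t) (hq : HasDerivAt q q' (1 - t)) :
    HasDerivAt (fun s => c * p s * q (1 - s)) (c * p' * q (1 - t) - c * p t * q') t := by
  have hq' := hq.comp t ((hasDerivAt_id t).const_sub 1)
  refine ((hp.const_mul c).mul hq').congr_deriv ?_
  rw [comp_apply]
  ring

namespace OrientedGraph

section Paths

variable {V : Type*} {R : V → V → Prop}

def IsPath (R : V → V → Prop) (γ : ℕ → V) (n : ℕ) : Prop :=
  ∀ i < n, R (γ i) (γ (i + 1))

def pathAppend (γ δ : ℕ → V) (n : ℕ) : ℕ → V :=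
  fun i => if i ≤ n then γ i else δ (i - n)

theorem pathAppend_zero (γ δ : ℕ → V) (n : ℕ) : pathAppend γ δ n 0 = γ 0 :=
  if_pos n.zero_le

theorem pathAppend_add {γ δ : ℕ → V} {n : ℕ} (h : γ n = δ 0) (k : ℕ) :
    pathAppend γ δ n (n + k) = δ k := by
  unfold pathAppend
  split_ifs with hk
  · obtain rfl : k = 0 := by omega
    exact h
  · rw [Nat.add_sub_cancel_left]

theorem IsPath.append {γ δ : ℕ → V} {n k : ℕ} (hγ : IsPath R γ n) (hδ : IsPath R δ k)
    (h : γ n = δ 0) : IsPath R (pathAppend γ δ n) (n + k) := by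
  intro i hi
  unfold pathAppend
  rcases lt_trichotomy i n with hin | rfl | hin
  · rw [if_pos hin.le, if_pos (Nat.succ_le_of_lt hin)]
    exact hγ i hin
  · rw [if_pos le_rfl, if_neg (by omega), h, Nat.add_sub_cancel_left]
    exact hδ 0 (by omega)
  · rw [if_neg (by omega), if_neg (by omega), show i + 1 - n = i - n + 1 by omega]
    exact hδ _ (by omega)

theorem isPath_edge {x y : V} (h : R x y) : IsPath R (fun i => if i = 0 then x else y) 1 := by
  intro i hi
  obtain rfl : i = 0 := by omega
  simpa using h

theorem exists_isPath_of_reflTransGen {x y : V} (h : ReflTransGen R x y) :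
    ∃ (γ : ℕ → V) (n : ℕ), γ 0 = x ∧ γ n = y ∧ IsPath R γ n := by
  induction h with
  | refl => exact ⟨fun _ => x, 0, rfl, rfl, fun i hi => absurd hi i.not_lt_zero⟩
  | @tail y z _ hyz ih =>
    obtain ⟨γ, n, rfl, rfl, hγ⟩ := ih
    refine ⟨pathAppend γ _ n, n + 1, pathAppend_zero .., ?_, hγ.append (isPath_edge hyz) rfl⟩
    simp [pathAppend_add]

end Paths

section GeodesicDist

variable {V : Type*} {R : V → V → Prop} {d : V → V → ℕ}

def IsGeodesicDist (R : V → V → Prop) (d : V → V → ℕ) : Prop :=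
  ∀ γ n, IsPath R γ n → d (γ 0) (γ n) = n

namespace IsGeodesicDist

theorem self (hd : IsGeodesicDist R d) (x : V) : d x x = 0 :=
  hd (fun _ => x) 0 fun i hi => absurd hi i.not_lt_zero

theorem eq_one_of_rel (hd : IsGeodesicDist R d) {x y : V} (h : R x y) : d x y = 1 := by
  simpa using hd _ 1 (isPath_edge h)

theorem add (hd : IsGeodesicDist R d) {x y z : V} (hxy : ReflTransGen R x y)
    (hyz : ReflTransGen R y z) : d x z = d x y + d y z := by
  obtain ⟨γ, n, rfl, rfl, hγ⟩ := exists_isPath_of_reflTransGen hxy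
  obtain ⟨δ, k, hδ0, rfl, hδ⟩ := exists_isPath_of_reflTransGen hyz
  have hn := hd γ n hγ
  have hk := hd δ k hδ
  have hnk := hd _ _ (hγ.append hδ hδ0.symm)
  rw [pathAppend_zero, pathAppend_add hδ0.symm] at hnk
  rw [hδ0] at hk
  omega

theorem add_one_of_rel_right (hd : IsGeodesicDist R d) {x y z : V} (hxy : ReflTransGen R x y)
    (hyz : R y z) : d x z = d x y + 1 := by
  rw [hd.add hxy (.single hyz), hd.eq_one_of_rel hyz]

theorem add_one_of_rel_left (hd : IsGeodesicDist R d) {x y z : V} (hxy : R x y)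
    (hyz : ReflTransGen R y z) : d x z = d y z + 1 := by
  rw [hd.add (.single hxy) hyz, hd.eq_one_of_rel hxy, add_comm]

end IsGeodesicDist

end GeodesicDist

section Heat

variable {V : Type*} [Fintype V] {R : V → V → Prop} {d : V → V → ℕ}
  {me m2 : V → V → ℝ} {m1 : V → ℝ}

def forwardHeat (R : V → V → Prop) (d : V → V → ℕ) (m1 : V → ℝ) (m2 : V → V → ℝ)
    (a : V → ℝ) (t : ℝ) (z : V) : ℝ :=
  (1 / m1 z) * ∑ x, if ReflTransGen R x z then
    m2 x z * a x * t ^ (d x z) / ((d x z).factorial : ℝ) else 0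

/-- For the reversed orientation, `inflow (swap R) (swap me)` is the outflow. -/
def inflow (R : V → V → Prop) (me : V → V → ℝ) (u : V → ℝ) (z : V) : ℝ :=
  ∑ y, if R y z then me y z * u y else 0

/-- The backward flow `Q_t` is the forward flow of the reversed orientation. -/
theorem forwardHeat_swap (d : V → V → ℕ) (m1 : V → ℝ) (m2 : V → V → ℝ) (b : V → ℝ)
    (t : ℝ) (z : V) :
    forwardHeat (swap R) (swap d) m1 (swap m2) b t z = (1 / m1 z) *
      ∑ y, if ReflTransGen R z y then m2 z y * b y * t ^ (d z y) / ((d z y).factorial : ℝ)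
        else 0 := by
  simp only [forwardHeat, reflTransGen_swap]

theorem hasDerivAt_heatTerm (hself : ∀ x, d x x = 0)
    (hstep : ∀ x y z, ReflTransGen R x y → R y z → d x z = d x y + 1)
    (hdecomp : ∀ x z, ReflTransGen R x z → x ≠ z →
      m2 x z = ∑ y, if R y z ∧ ReflTransGen R x y then m2 x y * me y z / m1 y else 0)
    (a : V → ℝ) (x z : V) (t : ℝ) :
    HasDerivAt (fun s => if ReflTransGen R x z then
        m2 x z * a x * s ^ (d x z) / ((d x z).factorial : ℝ) else 0)
      (∑ y, if R y z then me y z / m1 y * (if ReflTransGen R x y then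
        m2 x y * a x * t ^ (d x y) / ((d x y).factorial : ℝ) else 0) else 0) t := by
  by_cases hxz : ReflTransGen R x z
  swap
  · simp only [if_neg hxz]
    refine (hasDerivAt_const t (0 : ℝ)).congr_deriv (sum_eq_zero fun y _ => ?_).symm
    split_ifs with hyz hxy
    · exact absurd (hxy.tail hyz) hxz
    all_goals simp
  simp only [if_pos hxz]
  rcases hxz.cases_tail with rfl | ⟨y₀, hxy₀, hy₀z⟩
  · simp only [hself, pow_zero]
    refine (hasDerivAt_const t _).congr_deriv (sum_eq_zero fun y _ => ?_).symm
    split_ifs with hyz hzy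
    · have := hstep z y z hzy hyz
      rw [hself] at this
      omega
    all_goals simp
  have hxz_ne : x ≠ z := by
    rintro rfl
    have := hstep x y₀ x hxy₀ hy₀z
    rw [hself] at this
    omega
  obtain ⟨n, hn⟩ : ∃ n, d x z = n + 1 := ⟨_, hstep x y₀ z hxy₀ hy₀z⟩
  rw [hn]
  have hmono := (hasDerivAt_pow_succ_div_factorial n t).const_mul (m2 x z * a x)
  simp only [← mul_div_assoc] at hmono
  refine hmono.congr_deriv ?_
  rw [hdecomp x z hxz hxz_ne]
  simp only [sum_mul, sum_div]
  refine sum_congr rfl fun y _ => ?_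
  by_cases hyz : R y z
  · by_cases hxy : ReflTransGen R x y
    · have hxy_dist : d x y = n := by have := hstep x y z hxy hyz; omega
      simp only [hyz, hxy, and_self, if_true, hxy_dist]
      ring
    · simp [hyz, hxy]
  · simp [hyz]

theorem hasDerivAt_forwardHeat (hself : ∀ x, d x x = 0)
    (hstep : ∀ x y z, ReflTransGen R x y → R y z → d x z = d x y + 1)
    (hdecomp : ∀ x z, ReflTransGen R x z → x ≠ z →
      m2 x z = ∑ y, if R y z ∧ ReflTransGen R x y then m2 x y * me y z / m1 y else 0)
    (a : V → ℝ) (t : ℝ) (z : V) :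
    HasDerivAt (fun s => forwardHeat R d m1 m2 a s z)
      (inflow R me (forwardHeat R d m1 m2 a t) z / m1 z) t := by
  refine ((HasDerivAt.fun_sum fun x _ =>
    hasDerivAt_heatTerm hself hstep hdecomp a x z t).const_mul (1 / m1 z)).congr_deriv ?_
  rw [sum_comm, one_div_mul_eq_div, inflow]
  congr 1
  refine sum_congr rfl fun y _ => ?_
  by_cases hyz : R y z
  · simp only [hyz, if_true, forwardHeat, mul_sum]
    exact sum_congr rfl fun x _ => by ring
  · simp [hyz]

theorem hasDerivAt_backwardHeat (hself : ∀ x, d x x = 0)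
    (hstep : ∀ x y z, R x y → ReflTransGen R y z → d x z = d y z + 1)
    (hdecomp : ∀ x z, ReflTransGen R x z → x ≠ z →
      m2 x z = ∑ y, if R x y ∧ ReflTransGen R y z then me x y * m2 y z / m1 y else 0)
    (b : V → ℝ) (t : ℝ) (z : V) :
    HasDerivAt (fun s => forwardHeat (swap R) (swap d) m1 (swap m2) b s z)
      (inflow (swap R) (swap me) (forwardHeat (swap R) (swap d) m1 (swap m2) b t) z / m1 z)
      t := by
  refine hasDerivAt_forwardHeat (R := swap R) (d := swap d) (m2 := swap m2) (me := swap me)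
    hself (fun x y z hxy hyz => hstep z y x hyz (reflTransGen_swap.1 hxy))
    (fun x z hxz hne => ?_) b t z
  rw [swap, hdecomp z x (reflTransGen_swap.1 hxz) hne.symm]
  refine sum_congr rfl fun y _ => ?_
  simp only [swap, reflTransGen_swap, mul_comm (me z y)]

end Heat

section Geodesic

variable {V : Type*} [Fintype V] {R : V → V → Prop} {d : V → V → ℕ}
  {me m2 : V → V → ℝ} {m1 : V → ℝ} {m3 : V → V → V → ℝ} {P Q : ℝ → V → ℝ}

def binomialMixture (R : V → V → Prop) (d : V → V → ℕ) (m2 : V → V → ℝ)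
    (m3 : V → V → V → ℝ) (a b : V → ℝ) (t : ℝ) (z : V) : ℝ :=
  ∑ x, ∑ y, if ReflTransGen R x z ∧ ReflTransGen R z y then
      (m2 x y / ((d x y).factorial : ℝ)) * a x * b y *
        ((m3 x z y / m2 x y) *
          (((d x y).factorial : ℝ) / (((d x z).factorial : ℝ) * ((d z y).factorial : ℝ))) *
          t ^ (d x z) * (1 - t) ^ (d z y))
    else 0

theorem binomialMixture_eq_mul_forwardHeat {z : V} (hz : m1 z ≠ 0)
    (hm2 : ∀ x y, ReflTransGen R x y → m2 x y ≠ 0)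
    (hchain : ∀ x y z, ReflTransGen R x y → ReflTransGen R y z →
      m1 y * m3 x y z = m2 x y * m2 y z)
    (a b : V → ℝ) (t : ℝ) :
    binomialMixture R d m2 m3 a b t z =
      m1 z * forwardHeat R d m1 m2 a t z *
        forwardHeat (swap R) (swap d) m1 (swap m2) b (1 - t) z := by
  rw [forwardHeat_swap (R := R), forwardHeat, show ∀ A B : ℝ,
    m1 z * (1 / m1 z * A) * (1 / m1 z * B) = A * B / m1 z from fun A B => by field_simp,
    sum_mul_sum]
  simp only [sum_div]
  refine sum_congr rfl fun x _ => sum_congr rfl fun y _ => ?_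
  by_cases hxz : ReflTransGen R x z
  · by_cases hzy : ReflTransGen R z y
    · have hm3 : m3 x z y = m2 x z * m2 z y / m1 z := by
        rw [eq_div_iff hz, mul_comm, hchain x z y hxz hzy]
      simp only [hxz, hzy, and_self, if_true, hm3]
      field_simp [hm2 x y (hxz.trans hzy)]
    · simp [hzy]
  · simp [hxz]

theorem hasDerivAt_density
    (hP : ∀ t z, HasDerivAt (fun s => P s z) (inflow R me (P t) z / m1 z) t)
    (hQ : ∀ t z, HasDerivAt (fun s => Q s z) (inflow (swap R) (swap me) (Q t) z / m1 z) t)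
    (hm2edge : ∀ x y, R x y → m2 x y = me x y) {z : V} (hz : m1 z ≠ 0) (t : ℝ) :
    HasDerivAt (fun s => m1 z * P s z * Q (1 - s) z)
      (-((∑ y, if R z y then m2 z y * P t z * Q (1 - t) y else 0) -
          ∑ x, if R x z then m2 x z * P t x * Q (1 - t) z else 0)) t := by
  refine (hasDerivAt_const_mul_mul_comp_one_sub (m1 z) (hP t z) (hQ (1 - t) z)).congr_deriv ?_
  have hout : (∑ y, if R z y then m2 z y * P t z * Q (1 - t) y else 0) =
      P t z * inflow (swap R) (swap me) (Q (1 - t)) z :=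
    sum_ite_eq_mul_sum_ite _ fun y hy => by rw [hm2edge z y hy, swap]; ring
  have hin : (∑ x, if R x z then m2 x z * P t x * Q (1 - t) z else 0) =
      Q (1 - t) z * inflow R me (P t) z :=
    sum_ite_eq_mul_sum_ite _ fun x hx => by rw [hm2edge x z hx]; ring
  rw [hout, hin]
  field_simp
  ring

theorem hasDerivAt_flux
    (hP : ∀ t z, HasDerivAt (fun s => P s z) (inflow R me (P t) z / m1 z) t)
    (hQ : ∀ t z, HasDerivAt (fun s => Q s z) (inflow (swap R) (swap me) (Q t) z / m1 z) t)
    (hm2edge : ∀ x y, R x y → m2 x y = me x y) (hm1 : ∀ x, m1 x ≠ 0)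
    (hchain : ∀ x y z, ReflTransGen R x y → ReflTransGen R y z →
      m1 y * m3 x y z = m2 x y * m2 y z)
    {x₀ x₁ : V} (h01 : R x₀ x₁) (t : ℝ) :
    HasDerivAt (fun s => m2 x₀ x₁ * P s x₀ * Q (1 - s) x₁)
      (-((∑ x₂, if R x₁ x₂ then m3 x₀ x₁ x₂ * P t x₀ * Q (1 - t) x₂ else 0) -
          ∑ z, if R z x₀ then m3 z x₀ x₁ * P t z * Q (1 - t) x₁ else 0)) t := by
  refine (hasDerivAt_const_mul_mul_comp_one_sub (m2 x₀ x₁) (hP t x₀)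
    (hQ (1 - t) x₁)).congr_deriv ?_
  have hout : (∑ x₂, if R x₁ x₂ then m3 x₀ x₁ x₂ * P t x₀ * Q (1 - t) x₂ else 0) =
      m2 x₀ x₁ * P t x₀ / m1 x₁ * inflow (swap R) (swap me) (Q (1 - t)) x₁ :=
    sum_ite_eq_mul_sum_ite _ fun x₂ h12 => by
      have hc := hchain x₀ x₁ x₂ (.single h01) (.single h12)
      rw [hm2edge x₁ x₂ h12] at hc
      rw [swap]
      field_simp [hm1 x₁]
      linear_combination P t x₀ * Q (1 - t) x₂ * hc
  have hin : (∑ z, if R z x₀ then m3 z x₀ x₁ * P t z * Q (1 - t) x₁ else 0) =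
      m2 x₀ x₁ * Q (1 - t) x₁ / m1 x₀ * inflow R me (P t) x₀ :=
    sum_ite_eq_mul_sum_ite _ fun z hz0 => by
      have hc := hchain z x₀ x₁ (.single hz0) (.single h01)
      rw [hm2edge z x₀ hz0] at hc
      field_simp [hm1 x₀]
      linear_combination P t z * Q (1 - t) x₁ * hc
  rw [hout, hin]
  field_simp [hm1 x₀, hm1 x₁]
  ring

end Geodesic

end OrientedGraph

open OrientedGraph

theorem binomial_mixture_is_W1plus_geodesic_general
    {V : Type*} [Fintype V] (R : V → V → Prop)
    -- the partial order x ≤ y: existence of an oriented path from x to y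
    (lle : V → V → Prop) (hlle : ∀ x y, lle x y ↔ Relation.ReflTransGen R x y)
    -- the graph distance along the orientation (all oriented paths are geodesics)
    (dd : V → V → ℕ)
    (hdd : ∀ (γ : ℕ → V) (n : ℕ), (∀ i < n, R (γ i) (γ (i + 1))) → dd (γ 0) (γ n) = n)
    -- m on oriented edges, positive, with zero divergence outside sources and sinks
    (me : V → V → ℝ)
    (m1 : V → ℝ) (hm1pos : ∀ x, 0 < m1 x)
    -- the multiplicative extension of m to ordered pairs and triples
    (m2 : V → V → ℝ) (m3 : V → V → V → ℝ)
    (hm2edge : ∀ x y, R x y → m2 x y = me x y)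
    (hm2pos : ∀ x y, lle x y → 0 < m2 x y)
    (hchain : ∀ x z y, lle x z → lle z y → m1 z * m3 x z y = m2 x z * m2 z y)
    (hdecompL : ∀ x z, lle x z → x ≠ z →
      m2 x z = ∑ z₀, if R z₀ z ∧ lle x z₀ then m2 x z₀ * me z₀ z / m1 z₀ else 0)
    (hdecompR : ∀ z y, lle z y → z ≠ y →
      m2 z y = ∑ z₁, if R z z₁ ∧ lle z₁ y then me z z₁ * m2 z₁ y / m1 z₁ else 0)
    -- the nonnegative weights a, b
    (a b : V → ℝ)
    -- the functions P and Q
    (P Q : ℝ → V → ℝ)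
    (hP : ∀ t z, P t z = (1 / m1 z) *
      ∑ x, if lle x z then m2 x z * a x * t ^ (dd x z) / ((dd x z).factorial : ℝ) else 0)
    (hQ : ∀ t z, Q t z = (1 / m1 z) *
      ∑ y, if lle z y then m2 z y * b y * t ^ (dd z y) / ((dd z y).factorial : ℝ) else 0)
    -- the mixture of binomial distributions f_t
    (f : ℝ → V → ℝ)
    (hf : ∀ t z, f t z = ∑ x, ∑ y,
      if lle x z ∧ lle z y then
        (m2 x y / ((dd x y).factorial : ℝ)) * a x * b y *
          ((m3 x z y / m2 x y) *
            (((dd x y).factorial : ℝ) / (((dd x z).factorial : ℝ) * ((dd z y).factorial : ℝ))) *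
            t ^ (dd x z) * (1 - t) ^ (dd z y))
      else 0)
    -- the flux g and the field h on triples
    (g : ℝ → V → V → ℝ)
    (hg : ∀ t x₀ x₁, g t x₀ x₁ = m2 x₀ x₁ * P t x₀ * Q (1 - t) x₁)
    (h : ℝ → V → V → V → ℝ)
    (hh : ∀ t x₀ x₁ x₂, h t x₀ x₁ x₂ = m3 x₀ x₁ x₂ * P t x₀ * Q (1 - t) x₂) :
    (∀ t z, f t z = m1 z * P t z * Q (1 - t) z) ∧
    (∀ t z, HasDerivAt (fun s => f s z)
      (-((∑ y, if R z y then g t z y else 0) - ∑ x, if R x z then g t x z else 0)) t) ∧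
    (∀ t x₀ x₁, R x₀ x₁ → HasDerivAt (fun s => g s x₀ x₁)
      (-((∑ x₂, if R x₁ x₂ then h t x₀ x₁ x₂ else 0) -
          ∑ z, if R z x₀ then h t z x₀ x₁ else 0)) t) ∧
    (∀ t x₀ x₁ x₂, R x₀ x₁ → R x₁ x₂ →
      f t x₁ * h t x₀ x₁ x₂ = g t x₀ x₁ * g t x₁ x₂) := by
  obtain rfl : lle = ReflTransGen R := funext₂ fun x y => propext (hlle x y)
  have hd : IsGeodesicDist R dd := hdd
  have hm1 : ∀ x, m1 x ≠ 0 := fun x => (hm1pos x).ne'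
  have hPeq : P = forwardHeat R dd m1 m2 a := funext₂ hP
  have hQeq : Q = forwardHeat (swap R) (swap dd) m1 (swap m2) b :=
    funext₂ fun t z => (hQ t z).trans (forwardHeat_swap dd m1 m2 b t z).symm
  have hPd : ∀ t z, HasDerivAt (fun s => P s z) (inflow R me (P t) z / m1 z) t :=
    hPeq ▸ hasDerivAt_forwardHeat hd.self (fun _ _ _ => hd.add_one_of_rel_right) hdecompL a
  have hQd : ∀ t z, HasDerivAt (fun s => Q s z)
      (inflow (swap R) (swap me) (Q t) z / m1 z) t :=
    hQeq ▸ hasDerivAt_backwardHeat hd.self (fun _ _ _ => hd.add_one_of_rel_left) hdecompR b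
  have hf' : ∀ t z, f t z = m1 z * P t z * Q (1 - t) z := fun t z => (hf t z).trans <|
    hPeq ▸ hQeq ▸ binomialMixture_eq_mul_forwardHeat (hm1 z)
      (fun x y hxy => (hm2pos x y hxy).ne') hchain a b t
  refine ⟨hf', fun t z => ?_, fun t x₀ x₁ h01 => ?_, fun t x₀ x₁ x₂ h01 h12 => ?_⟩
  · simp only [hf', hg]
    exact hasDerivAt_density hPd hQd hm2edge (hm1 z) t
  · simp only [hg, hh]
    exact hasDerivAt_flux hPd hQd hm2edge hm1 hchain h01 t
  · rw [hf', hh, hg, hg]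
    linear_combination P t x₀ * P t x₁ * Q (1 - t) x₁ * Q (1 - t) x₂ *
      hchain x₀ x₁ x₂ (.single h01) (.single h12)

theorem binomial_mixture_is_W1plus_geodesic
    {V : Type*} [Fintype V] (R : V → V → Prop)
    -- the partial order x ≤ y: existence of an oriented path from x to y
    (lle : V → V → Prop) (hlle : ∀ x y, lle x y ↔ Relation.ReflTransGen R x y)
    -- the graph distance along the orientation (all oriented paths are geodesics)
    (dd : V → V → ℕ)
    (hdd : ∀ (γ : ℕ → V) (n : ℕ), (∀ i < n, R (γ i) (γ (i + 1))) → dd (γ 0) (γ n) = n)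
    -- m on oriented edges, positive, with zero divergence outside sources and sinks
    (me : V → V → ℝ) (hme : ∀ x y, R x y → 0 < me x y)
    (m1 : V → ℝ) (hm1pos : ∀ x, 0 < m1 x)
    (hm1out : ∀ x, (∃ y, R x y) → m1 x = ∑ y, if R x y then me x y else 0)
    (hm1in : ∀ x, (∃ z, R z x) → m1 x = ∑ z, if R z x then me z x else 0)
    -- the multiplicative extension of m to ordered pairs and triples
    (m2 : V → V → ℝ) (m3 : V → V → V → ℝ)
    (hm2edge : ∀ x y, R x y → m2 x y = me x y)
    (hm2self : ∀ x, m2 x x = m1 x)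
    (hm2pos : ∀ x y, lle x y → 0 < m2 x y)
    (hchain : ∀ x z y, lle x z → lle z y → m1 z * m3 x z y = m2 x z * m2 z y)
    (hdecompL : ∀ x z, lle x z → x ≠ z →
      m2 x z = ∑ z₀, if R z₀ z ∧ lle x z₀ then m2 x z₀ * me z₀ z / m1 z₀ else 0)
    (hdecompR : ∀ z y, lle z y → z ≠ y →
      m2 z y = ∑ z₁, if R z z₁ ∧ lle z₁ y then me z z₁ * m2 z₁ y / m1 z₁ else 0)
    -- the nonnegative weights a, b
    (a b : V → ℝ) (ha : ∀ x, 0 ≤ a x) (hb : ∀ y, 0 ≤ b y)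
    -- the functions P and Q
    (P Q : ℝ → V → ℝ)
    (hP : ∀ t z, P t z = (1 / m1 z) *
      ∑ x, if lle x z then m2 x z * a x * t ^ (dd x z) / ((dd x z).factorial : ℝ) else 0)
    (hQ : ∀ t z, Q t z = (1 / m1 z) *
      ∑ y, if lle z y then m2 z y * b y * t ^ (dd z y) / ((dd z y).factorial : ℝ) else 0)
    -- the mixture of binomial distributions f_t
    (f : ℝ → V → ℝ)
    (hf : ∀ t z, f t z = ∑ x, ∑ y,
      if lle x z ∧ lle z y then
        (m2 x y / ((dd x y).factorial : ℝ)) * a x * b y *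
          ((m3 x z y / m2 x y) *
            (((dd x y).factorial : ℝ) / (((dd x z).factorial : ℝ) * ((dd z y).factorial : ℝ))) *
            t ^ (dd x z) * (1 - t) ^ (dd z y))
      else 0)
    -- the flux g and the field h on triples
    (g : ℝ → V → V → ℝ)
    (hg : ∀ t x₀ x₁, g t x₀ x₁ = m2 x₀ x₁ * P t x₀ * Q (1 - t) x₁)
    (h : ℝ → V → V → V → ℝ)
    (hh : ∀ t x₀ x₁ x₂, h t x₀ x₁ x₂ = m3 x₀ x₁ x₂ * P t x₀ * Q (1 - t) x₂) :
    (∀ t z, f t z = m1 z * P t z * Q (1 - t) z) ∧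
    (∀ t z, HasDerivAt (fun s => f s z)
      (-((∑ y, if R z y then g t z y else 0) - ∑ x, if R x z then g t x z else 0)) t) ∧
    (∀ t x₀ x₁, R x₀ x₁ → HasDerivAt (fun s => g s x₀ x₁)
      (-((∑ x₂, if R x₁ x₂ then h t x₀ x₁ x₂ else 0) -
          ∑ z, if R z x₀ then h t z x₀ x₁ else 0)) t) ∧
    (∀ t x₀ x₁ x₂, R x₀ x₁ → R x₁ x₂ →
      f t x₁ * h t x₀ x₁ x₂ = g t x₀ x₁ * g t x₁ x₂) :=
  binomial_mixture_is_W1plus_geodesic_general R lle hlle dd hdd me m1 hm1pos m2 m3 hm2edge hm2pos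
    hchain hdecompL hdecompR a b P Q hP hQ f hf g hg h hh
end
end
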